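/- arXiv:1002.0109 — 6 statements merged into one kernel-verified Lean document; each statement's English description precedes it below -/
import Mathlib

section
/- Let m_1,...,m_n be nonnegative real numbers, not all zero, with M = max_i m_i = 1, and let l be the number of indices i with m_i = 1. Then there exist constants C, C' > 0 depending on the m_i such that for all 0 < δ < 1/2: C |ln δ|^l δ ≤ ∫_{{x ∈ (0,1)^n : δ/(x_1^{m_1}···x_n^{m_n}) < 1}} δ/(x_1^{m_1}···x_n^{m_n}) dx ≤ C' |ln δ|^l δ. -/
open MeasureTheory Set

private lemma indicator_pi_prod {n : ℕ} (s : Fin n → Set ℝ) (g : Fin n → ℝ → ℝ)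
    (x : Fin n → ℝ) :
    (Set.pi univ s).indicator (fun x => ∏ i, g i (x i)) x
      = ∏ i, (s i).indicator (g i) (x i) := by
  by_cases h : x ∈ Set.pi univ s
  · rw [Set.indicator_of_mem h]
    exact Finset.prod_congr rfl fun i _ =>
      (Set.indicator_of_mem (h i (Set.mem_univ i)) _).symm
  · rw [Set.indicator_of_notMem h]
    rw [Set.mem_pi] at h; push_neg at h
    obtain ⟨i, -, hi⟩ := h
    exact (Finset.prod_eq_zero (Finset.mem_univ i)
      (Set.indicator_of_notMem hi _)).symm

private lemma integrableOn_pi_prod {n : ℕ} {s : Fin n → Set ℝ}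
    (hs : ∀ i, MeasurableSet (s i)) {g : Fin n → ℝ → ℝ}
    (hg : ∀ i, IntegrableOn (g i) (s i)) :
    IntegrableOn (fun x : Fin n → ℝ => ∏ i, g i (x i)) (Set.pi univ s) := by
  have h : (Set.pi univ s).indicator (fun x : Fin n → ℝ => ∏ i, g i (x i))
      = fun x => ∏ i, (s i).indicator (g i) (x i) := funext (indicator_pi_prod s g)
  refine (integrable_indicator_iff (MeasurableSet.univ_pi hs)).1 ?_
  rw [h]
  exact Integrable.fintype_prod fun i => (integrable_indicator_iff (hs i)).2 (hg i)

private lemma setIntegral_pi_prod {n : ℕ} {s : Fin n → Set ℝ}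
    (hs : ∀ i, MeasurableSet (s i)) (g : Fin n → ℝ → ℝ) :
    ∫ x in Set.pi univ s, ∏ i, g i (x i) = ∏ i, ∫ x in s i, g i x := by
  rw [← integral_indicator (MeasurableSet.univ_pi hs)]
  simp_rw [indicator_pi_prod s g]
  rw [MeasureTheory.integral_fintype_prod_volume_eq_prod
    (fun i => (s i).indicator (g i))]
  exact Finset.prod_congr rfl fun i _ => integral_indicator (hs i)

private lemma integrableOn_rpow_Ioo₁ {b r : ℝ} (hb : 0 < b) (hb1 : b ≤ 1) :
    IntegrableOn (fun x : ℝ => x ^ r) (Ioo b 1) := by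
  have h : IntervalIntegrable (fun x : ℝ => x ^ r) volume b 1 :=
    intervalIntegral.intervalIntegrable_rpow
      (Or.inr (Set.notMem_uIcc_of_lt hb one_pos))
  exact ((intervalIntegrable_iff_integrableOn_Ioc_of_le hb1).1 h).mono_set
    Set.Ioo_subset_Ioc_self

private lemma integrableOn_rpow_Ioo₂ {b r : ℝ} (hr : -1 < r) (hb1 : b ≤ 1) :
    IntegrableOn (fun x : ℝ => x ^ r) (Ioo b 1) := by
  have h : IntervalIntegrable (fun x : ℝ => x ^ r) volume b 1 :=
    intervalIntegral.intervalIntegrable_rpow' hr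
  exact ((intervalIntegrable_iff_integrableOn_Ioc_of_le hb1).1 h).mono_set
    Set.Ioo_subset_Ioc_self

private lemma integral_rpow_Ioo_neg_one {b : ℝ} (hb : 0 < b) (hb1 : b ≤ 1) :
    ∫ x in Ioo b 1, x ^ (-1 : ℝ) = -Real.log b := by
  rw [← MeasureTheory.integral_Ioc_eq_integral_Ioo,
    ← intervalIntegral.integral_of_le hb1]
  have h : ∫ x in b..1, x ^ (-1 : ℝ) = ∫ x in b..1, x⁻¹ := by
    simp [Real.rpow_neg_one]
  rw [h, integral_inv (Set.notMem_uIcc_of_lt hb one_pos)]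
  rw [Real.log_div one_ne_zero hb.ne']
  simp

private lemma integral_rpow_Ioo {b r : ℝ} (hr : -1 < r) (hb1 : b ≤ 1) :
    ∫ x in Ioo b 1, x ^ r = (1 - b ^ (r + 1)) / (r + 1) := by
  rw [← MeasureTheory.integral_Ioc_eq_integral_Ioo,
    ← intervalIntegral.integral_of_le hb1, integral_rpow (Or.inl hr),
    Real.one_rpow]

private lemma le_integral_rpow_Ioo {b r : ℝ} (hb : 0 < b) (hb1 : b < 1)
    (hr : r ≤ 0) : 1 - b ≤ ∫ x in Ioo b 1, x ^ r := by
  have h0 : ∫ x in Ioo b 1, (1 : ℝ) = 1 - b := by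
    rw [setIntegral_const, Real.volume_real_Ioo_of_le (by linarith), smul_eq_mul, mul_one]
  rw [← h0]
  refine setIntegral_mono_on (integrableOn_const (lt_top_iff_ne_top.1 ?_))
    (integrableOn_rpow_Ioo₁ hb hb1.le) measurableSet_Ioo ?_
  · rw [Real.volume_Ioo]; exact ENNReal.ofReal_lt_top
  · intro x hx
    exact Real.one_le_rpow_of_pos_of_le_one_of_nonpos (hb.trans hx.1) hx.2.le hr

theorem integral_monomial_exponent_one
    {n : ℕ} (m : Fin n → ℝ) (hm : ∀ i, 0 ≤ m i) (hne : ∃ i, m i ≠ 0)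
    (M : ℝ) (hM : IsGreatest (Set.range m) M) (hM1 : M = 1)
    (l : ℕ) (hl : l = Nat.card {i : Fin n // m i = 1}) :
    ∃ C > (0:ℝ), ∃ C' > (0:ℝ), ∀ δ : ℝ, 0 < δ → δ < 1/2 →
      C * |Real.log δ| ^ l * δ ≤
        (∫ x in {x : Fin n → ℝ |
            (∀ i, x i ∈ Set.Ioo (0:ℝ) 1) ∧ δ / (∏ i, x i ^ m i) < 1},
          δ / (∏ i, x i ^ m i)) ∧
      (∫ x in {x : Fin n → ℝ |
            (∀ i, x i ∈ Set.Ioo (0:ℝ) 1) ∧ δ / (∏ i, x i ^ m i) < 1},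
          δ / (∏ i, x i ^ m i)) ≤ C' * |Real.log δ| ^ l * δ := by
  classical
  subst hM1
  obtain ⟨hmem, hub⟩ := hM
  obtain ⟨i₁, hi₁⟩ := hmem
  haveI : Nonempty (Fin n) := ⟨i₁⟩
  have hm1 : ∀ i, m i ≤ 1 := fun i => hub ⟨i, rfl⟩
  have hn : 0 < n := i₁.pos
  have hnR : (0:ℝ) < n := by exact_mod_cast hn
  have hl' : l = (Finset.univ.filter (fun i => m i = 1)).card := by
    rw [hl, Nat.card_eq_fintype_card, Fintype.card_subtype]
  have hlpos : 0 < l := by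
    rw [hl']
    exact Finset.card_pos.2 ⟨i₁, Finset.mem_filter.2 ⟨Finset.mem_univ _, hi₁⟩⟩
  have hlR : (0:ℝ) < l := by exact_mod_cast hlpos
  have hlR1 : (1:ℝ) ≤ l := by exact_mod_cast hlpos
  have hln : l ≤ n := by
    rw [hl']
    simpa using Finset.card_filter_le (Finset.univ : Finset (Fin n))
      (fun i => m i = 1)
  have hcard_not : (Finset.univ.filter (fun i => ¬ m i = 1)).card = n - l := by
    have h := Finset.card_filter_add_card_filter_not
      (s := (Finset.univ : Finset (Fin n))) (p := fun i => m i = 1)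
    simp only [Finset.card_univ, Fintype.card_fin] at h
    omega
  set c : ℝ := 1 - (1/2 : ℝ) ^ ((1:ℝ)/(2*(n:ℝ))) with hc
  have hcpos : 0 < c := by
    have h : (1/2:ℝ) ^ ((1:ℝ)/(2*(n:ℝ))) < 1 :=
      Real.rpow_lt_one (by norm_num) (by norm_num) (by positivity)
    simp only [hc]; linarith
  refine ⟨c ^ (n - l) * (1/(2*(l:ℝ)))^l, by positivity,
    ∏ i, (if m i = 1 then 1 else 1/(1 - m i)), ?_, ?_⟩
  · apply Finset.prod_pos
    intro i _
    split
    · norm_num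
    · have h : m i < 1 := lt_of_le_of_ne (hm1 i) ‹_›
      have h2 : 0 < 1 - m i := by linarith
      positivity
  intro δ hδ0 hδh
  have hδ1 : δ < 1 := by linarith
  have hlogneg : Real.log δ < 0 := Real.log_neg hδ0 hδ1
  set D : ℝ := |Real.log δ| with hD
  have hDeq : D = -Real.log δ := abs_of_neg hlogneg
  have hDpos : 0 < D := by rw [hDeq]; linarith
  set A : Set (Fin n → ℝ) := {x : Fin n → ℝ |
      (∀ i, x i ∈ Set.Ioo (0:ℝ) 1) ∧ δ / (∏ i, x i ^ m i) < 1} with hA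
  set a : Fin n → ℝ := fun i =>
    if m i = 1 then δ ^ ((1:ℝ)/(2*(l:ℝ))) else δ ^ ((1:ℝ)/(2*(n:ℝ))) with ha
  set b : Fin n → ℝ := fun i => if m i = 1 then δ else 0 with hb
  set g : Fin n → ℝ → ℝ := fun i x => x ^ (-m i) with hg
  set S : Set (Fin n → ℝ) := Set.pi univ (fun i => Ioo (a i) 1) with hS
  set T : Set (Fin n → ℝ) := Set.pi univ (fun i => Ioo (b i) 1) with hT
  have ha0 : ∀ i, 0 < a i := by
    intro i; simp only [ha]; split <;> exact Real.rpow_pos_of_pos hδ0 _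
  have ha1 : ∀ i, a i < 1 := by
    intro i; simp only [ha]; split <;>
      exact Real.rpow_lt_one hδ0.le hδ1 (by positivity)
  have hb0 : ∀ i, 0 ≤ b i := by
    intro i; simp only [hb]; split
    · exact hδ0.le
    · exact le_refl 0
  have hba : ∀ i, b i ≤ a i := by
    intro i
    by_cases h : m i = 1
    · simp only [ha, hb, if_pos h]
      calc δ = δ ^ (1:ℝ) := (Real.rpow_one δ).symm
      _ ≤ δ ^ ((1:ℝ)/(2*(l:ℝ))) :=
          Real.rpow_le_rpow_of_exponent_ge hδ0 hδ1.le
            (by rw [div_le_one (by positivity)]; linarith)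
    · simp only [ha, hb, if_neg h]
      exact (Real.rpow_pos_of_pos hδ0 _).le
  have hPpos : ∀ x : Fin n → ℝ, (∀ i, 0 < x i) → 0 < ∏ i, x i ^ m i :=
    fun x hx => Finset.prod_pos fun i _ => Real.rpow_pos_of_pos (hx i) _
  have hFG : ∀ x : Fin n → ℝ, (∀ i, 0 < x i) →
      δ / ∏ i, x i ^ m i = δ * ∏ i, g i (x i) := by
    intro x hx
    rw [div_eq_mul_inv, ← Finset.prod_inv_distrib]
    congr 1
    exact Finset.prod_congr rfl fun i _ => by
      simp only [hg]; rw [Real.rpow_neg (hx i).le]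
  have hAmeas : MeasurableSet A := by
    have h1 : MeasurableSet {x : Fin n → ℝ | ∀ i, x i ∈ Set.Ioo (0:ℝ) 1} := by
      have he : {x : Fin n → ℝ | ∀ i, x i ∈ Set.Ioo (0:ℝ) 1}
          = Set.pi univ (fun _ => Ioo (0:ℝ) 1) := by
        ext x; simp [Set.mem_pi]
      rw [he]; exact MeasurableSet.univ_pi fun _ => measurableSet_Ioo
    have h2 : Measurable fun x : Fin n → ℝ => δ / ∏ i, x i ^ m i :=
      measurable_const.div
        (Finset.measurable_prod _ fun i _ =>
          (measurable_pi_apply i).pow measurable_const)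
    have he : A = {x : Fin n → ℝ | ∀ i, x i ∈ Set.Ioo (0:ℝ) 1} ∩
        ((fun x : Fin n → ℝ => δ / ∏ i, x i ^ m i) ⁻¹' Iio 1) := by
      ext x; simp only [hA, Set.mem_setOf_eq, Set.mem_inter_iff, Set.mem_preimage,
        Set.mem_Iio]
    rw [he]
    exact h1.inter (h2 measurableSet_Iio)
  have hSmeas : MeasurableSet S :=
    MeasurableSet.univ_pi fun _ => measurableSet_Ioo
  have hTmeas : MeasurableSet T :=
    MeasurableSet.univ_pi fun _ => measurableSet_Ioo
  have hg_int : ∀ i, IntegrableOn (g i) (Ioo (b i) 1) := by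
    intro i
    by_cases h : m i = 1
    · simp only [hb, hg, if_pos h, h]
      exact integrableOn_rpow_Ioo₁ hδ0 hδ1.le
    · have hlt : m i < 1 := lt_of_le_of_ne (hm1 i) h
      simp only [hb, hg, if_neg h]
      exact integrableOn_rpow_Ioo₂ (by linarith) (by norm_num)
  have hga_int : ∀ i, IntegrableOn (g i) (Ioo (a i) 1) :=
    fun i => (hg_int i).mono_set (Set.Ioo_subset_Ioo_left (hba i))
  -- inclusions
  have hAT : A ⊆ T := by
    rintro x ⟨hx01, hlt⟩
    rw [hT, Set.mem_pi]
    intro i _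
    constructor
    · by_cases h : m i = 1
      · simp only [hb, if_pos h]
        have hP : 0 < ∏ j, x j ^ m j := hPpos x (fun j => (hx01 j).1)
        have hδP : δ < ∏ j, x j ^ m j := (div_lt_one hP).1 hlt
        have hle : ∏ j, x j ^ m j ≤ x i ^ m i := by
          rw [← Finset.mul_prod_erase Finset.univ _ (Finset.mem_univ i)]
          have h1 : ∏ j ∈ Finset.univ.erase i, x j ^ m j ≤ 1 :=
            Finset.prod_le_one
              (fun j _ => (Real.rpow_pos_of_pos (hx01 j).1 _).le)
              (fun j _ => Real.rpow_le_one (hx01 j).1.le (hx01 j).2.le (hm j))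
          nlinarith [Real.rpow_pos_of_pos (hx01 i).1 (m i)]
        calc δ < ∏ j, x j ^ m j := hδP
        _ ≤ x i ^ m i := hle
        _ = x i := by rw [h, Real.rpow_one]
      · simp only [hb, if_neg h]
        exact (hx01 i).1
    · exact (hx01 i).2
  have hprod_a : δ ≤ ∏ i, a i := by
    have h1 : ∏ i ∈ Finset.univ.filter (fun i => m i = 1), a i
        = δ ^ ((1:ℝ)/(2*(l:ℝ)) * l) := by
      rw [Finset.prod_congr rfl (fun i hi => by
        simp only [ha, if_pos (Finset.mem_filter.1 hi).2] :
        ∀ i ∈ Finset.univ.filter (fun i => m i = 1),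
          a i = δ ^ ((1:ℝ)/(2*(l:ℝ)))), Finset.prod_const, ← hl',
        ← Real.rpow_natCast (δ ^ ((1:ℝ)/(2*(l:ℝ)))) l, ← Real.rpow_mul hδ0.le]
    have h2 : ∏ i ∈ Finset.univ.filter (fun i => ¬ m i = 1), a i
        = δ ^ ((1:ℝ)/(2*(n:ℝ)) * ((n - l : ℕ):ℝ)) := by
      rw [Finset.prod_congr rfl (fun i hi => by
        simp only [ha, if_neg (Finset.mem_filter.1 hi).2] :
        ∀ i ∈ Finset.univ.filter (fun i => ¬ m i = 1),
          a i = δ ^ ((1:ℝ)/(2*(n:ℝ)))), Finset.prod_const, hcard_not,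
        ← Real.rpow_natCast (δ ^ ((1:ℝ)/(2*(n:ℝ)))) (n - l),
        ← Real.rpow_mul hδ0.le]
    have hsplit : ∏ i, a i
        = δ ^ ((1:ℝ)/(2*(l:ℝ)) * l + (1:ℝ)/(2*(n:ℝ)) * ((n - l : ℕ):ℝ)) := by
      rw [← Finset.prod_filter_mul_prod_filter_not Finset.univ
        (fun i => m i = 1), h1, h2, ← Real.rpow_add hδ0]
    have hE : (1:ℝ)/(2*(l:ℝ)) * l + (1:ℝ)/(2*(n:ℝ)) * ((n - l : ℕ):ℝ) ≤ 1 := by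
      have e1 : (1:ℝ)/(2*(l:ℝ)) * l = 1/2 := by field_simp
      have hcast : ((n - l : ℕ):ℝ) = (n:ℝ) - l := by
        rw [Nat.cast_sub hln]
      have h3 : (1:ℝ)/(2*(n:ℝ)) * ((n:ℝ) - l) ≤ (1:ℝ)/(2*(n:ℝ)) * n :=
        mul_le_mul_of_nonneg_left (by linarith) (by positivity)
      have h4 : (1:ℝ)/(2*(n:ℝ)) * n = 1/2 := by field_simp
      rw [hcast]
      linarith
    rw [hsplit]
    calc δ = δ ^ (1:ℝ) := (Real.rpow_one δ).symm
    _ ≤ δ ^ ((1:ℝ)/(2*(l:ℝ)) * l + (1:ℝ)/(2*(n:ℝ)) * ((n - l : ℕ):ℝ)) :=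
        Real.rpow_le_rpow_of_exponent_ge hδ0 hδ1.le hE
  have hSA : S ⊆ A := by
    intro x hx
    rw [hS, Set.mem_pi] at hx
    have hx01 : ∀ i, x i ∈ Set.Ioo (0:ℝ) 1 :=
      fun i => ⟨(ha0 i).trans (hx i (Set.mem_univ i)).1, (hx i (Set.mem_univ i)).2⟩
    have h1 : ∏ i, a i < ∏ i, x i :=
      Finset.prod_lt_prod_of_nonempty (fun i _ => ha0 i)
        (fun i _ => (hx i (Set.mem_univ i)).1) Finset.univ_nonempty
    have h2 : ∏ i, x i ≤ ∏ i, x i ^ m i :=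
      Finset.prod_le_prod (fun i _ => (hx01 i).1.le)
        (fun i _ => by
          calc x i = x i ^ (1:ℝ) := (Real.rpow_one _).symm
          _ ≤ x i ^ m i :=
            Real.rpow_le_rpow_of_exponent_ge (hx01 i).1 (hx01 i).2.le (hm1 i))
    have hP : 0 < ∏ i, x i ^ m i := hPpos x fun i => (hx01 i).1
    exact ⟨hx01, (div_lt_one hP).2
      (lt_of_le_of_lt hprod_a (h1.trans_le h2))⟩
  -- integrability
  have hIntGT : IntegrableOn (fun x : Fin n → ℝ => δ * ∏ i, g i (x i)) T :=
    (integrableOn_pi_prod (fun _ => measurableSet_Ioo) hg_int).const_mul δ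
  have hIntFA : IntegrableOn (fun x : Fin n → ℝ => δ / ∏ i, x i ^ m i) A :=
    (hIntGT.mono_set hAT).congr_fun
      (fun x hx => (hFG x (fun i => (hx.1 i).1)).symm) hAmeas
  -- nonnegativity
  have hGnonnegT : 0 ≤ᵐ[volume.restrict T]
      fun x : Fin n → ℝ => δ * ∏ i, g i (x i) := by
    refine (ae_restrict_mem hTmeas).mono ?_
    intro x hx
    have hxpos : ∀ i, 0 < x i :=
      fun i => (hb0 i).trans_lt (hx i (Set.mem_univ i)).1
    exact mul_nonneg hδ0.le
      (Finset.prod_nonneg fun i _ => Real.rpow_nonneg (hxpos i).le _)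
  have hFnonnegA : 0 ≤ᵐ[volume.restrict A]
      fun x : Fin n → ℝ => δ / ∏ i, x i ^ m i := by
    refine (ae_restrict_mem hAmeas).mono ?_
    intro x hx
    exact div_nonneg hδ0.le (hPpos x fun i => (hx.1 i).1).le
  -- per-coordinate integral values
  have hTval : ∀ i, ∫ x in Ioo (b i) 1, g i x
      = if m i = 1 then D else 1/(1 - m i) := by
    intro i
    by_cases h : m i = 1
    · simp only [hb, hg, if_pos h, h]
      rw [integral_rpow_Ioo_neg_one hδ0 hδ1.le, hDeq]; simp
    · have hlt : m i < 1 := lt_of_le_of_ne (hm1 i) h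
      simp only [hb, hg, if_neg h]
      rw [integral_rpow_Ioo (by linarith : (-1:ℝ) < -m i)
        (by norm_num : (0:ℝ) ≤ 1),
        Real.zero_rpow (by linarith : -m i + 1 ≠ 0), sub_zero]
      rw [show -m i + 1 = 1 - m i by ring]
  have hSval1 : ∀ i, m i = 1 → ∫ x in Ioo (a i) 1, g i x = D / (2*(l:ℝ)) := by
    intro i h
    simp only [ha, hg, if_pos h, h]
    rw [integral_rpow_Ioo_neg_one (Real.rpow_pos_of_pos hδ0 _)
      (Real.rpow_lt_one hδ0.le hδ1 (by positivity)).le,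
      Real.log_rpow hδ0, hDeq]
    ring
  have hSval2 : ∀ i, ¬ m i = 1 → c ≤ ∫ x in Ioo (a i) 1, g i x := by
    intro i h
    simp only [ha, hg, if_neg h]
    have h1 : 1 - δ ^ ((1:ℝ)/(2*(n:ℝ)))
        ≤ ∫ x in Ioo (δ ^ ((1:ℝ)/(2*(n:ℝ)))) 1, x ^ (-m i) :=
      le_integral_rpow_Ioo (Real.rpow_pos_of_pos hδ0 _)
        (Real.rpow_lt_one hδ0.le hδ1 (by positivity))
        (neg_nonpos.2 (hm i))
    have h2 : δ ^ ((1:ℝ)/(2*(n:ℝ))) ≤ (1/2:ℝ) ^ ((1:ℝ)/(2*(n:ℝ))) :=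
      Real.rpow_le_rpow hδ0.le hδh.le (by positivity)
    simp only [hc]
    linarith
  -- integral over S and T as products
  have hSsub01 : ∀ x ∈ S, ∀ i, 0 < x i := by
    intro x hx i
    rw [hS, Set.mem_pi] at hx
    exact (ha0 i).trans (hx i (Set.mem_univ i)).1
  have hS_int_eq : ∫ x in S, δ / ∏ i, x i ^ m i
      = δ * ∏ i, ∫ x in Ioo (a i) 1, g i x := by
    rw [setIntegral_congr_fun hSmeas
      (fun x hx => hFG x (hSsub01 x hx) :
        Set.EqOn (fun x : Fin n → ℝ => δ / ∏ i, x i ^ m i)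
          (fun x : Fin n → ℝ => δ * ∏ i, g i (x i)) S)]
    rw [hS, integral_const_mul, setIntegral_pi_prod (fun _ => measurableSet_Ioo) g]
  have hT_int_eq : ∫ x in T, δ * ∏ i, g i (x i)
      = δ * ∏ i, ∫ x in Ioo (b i) 1, g i x := by
    rw [hT, integral_const_mul, setIntegral_pi_prod (fun _ => measurableSet_Ioo) g]
  constructor
  · -- lower bound
    have hle : ∏ i, (if m i = 1 then D/(2*(l:ℝ)) else c)
        ≤ ∏ i, ∫ x in Ioo (a i) 1, g i x := by
      refine Finset.prod_le_prod (fun i _ => ?_) (fun i _ => ?_)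
      · split
        · positivity
        · exact hcpos.le
      · by_cases h : m i = 1
        · rw [if_pos h]
          exact le_of_eq (hSval1 i h).symm
        · rw [if_neg h]
          exact hSval2 i h
    have hprod_ite : ∏ i, (if m i = 1 then D/(2*(l:ℝ)) else c)
        = (D/(2*(l:ℝ)))^l * c^(n-l) := by
      rw [← Finset.prod_filter_mul_prod_filter_not Finset.univ
        (fun i => m i = 1)]
      congr 1
      · rw [Finset.prod_congr rfl
          (fun i hi => if_pos (Finset.mem_filter.1 hi).2),
          Finset.prod_const, ← hl']
      · rw [Finset.prod_congr rfl
          (fun i hi => if_neg (Finset.mem_filter.1 hi).2),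
          Finset.prod_const, hcard_not]
    calc c ^ (n - l) * (1/(2*(l:ℝ)))^l * D ^ l * δ
        = δ * ((D/(2*(l:ℝ)))^l * c^(n-l)) := by
          rw [div_pow, div_pow, one_pow]; ring
      _ ≤ δ * ∏ i, ∫ x in Ioo (a i) 1, g i x := by
          refine mul_le_mul_of_nonneg_left ?_ hδ0.le
          rw [← hprod_ite]
          exact hle
      _ = ∫ x in S, δ / ∏ i, x i ^ m i := hS_int_eq.symm
      _ ≤ ∫ x in A, δ / ∏ i, x i ^ m i :=
          setIntegral_mono_set hIntFA hFnonnegA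
            (HasSubset.Subset.eventuallyLE hSA)
  · -- upper bound
    have hprod_ite : ∏ i, (if m i = 1 then D else 1/(1 - m i))
        = D^l * ∏ i ∈ Finset.univ.filter (fun i => ¬ m i = 1), (1/(1 - m i)) := by
      rw [← Finset.prod_filter_mul_prod_filter_not Finset.univ
        (fun i => m i = 1)]
      congr 1
      · rw [Finset.prod_congr rfl
          (fun i hi => if_pos (Finset.mem_filter.1 hi).2),
          Finset.prod_const, ← hl']
      · exact Finset.prod_congr rfl
          (fun i hi => if_neg (Finset.mem_filter.1 hi).2)
    have hC'eq : ∏ i, (if m i = 1 then (1:ℝ) else 1/(1 - m i))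
        = ∏ i ∈ Finset.univ.filter (fun i => ¬ m i = 1), (1/(1 - m i)) := by
      rw [← Finset.prod_filter_mul_prod_filter_not Finset.univ
        (fun i => m i = 1)]
      rw [Finset.prod_congr rfl
          (fun i hi => if_pos (Finset.mem_filter.1 hi).2),
        Finset.prod_const, one_pow, one_mul]
      exact Finset.prod_congr rfl
        (fun i hi => if_neg (Finset.mem_filter.1 hi).2)
    calc ∫ x in A, δ / ∏ i, x i ^ m i
        = ∫ x in A, δ * ∏ i, g i (x i) :=
          setIntegral_congr_fun hAmeas
            (fun x hx => hFG x (fun i => (hx.1 i).1))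
      _ ≤ ∫ x in T, δ * ∏ i, g i (x i) :=
          setIntegral_mono_set hIntGT hGnonnegT
            (HasSubset.Subset.eventuallyLE hAT)
      _ = δ * ∏ i, ∫ x in Ioo (b i) 1, g i x := hT_int_eq
      _ = (∏ i, (if m i = 1 then (1:ℝ) else 1/(1 - m i))) * D ^ l * δ := by
          rw [Finset.prod_congr rfl (fun i _ => hTval i), hprod_ite, hC'eq]
          ring
end

section
/- Let m_1,...,m_n be nonnegative real numbers with M = max_i m_i > 1. Then there exists a constant C' > 0 depending on the m_i such that for all 0 < δ < 1: ∫_{{x ∈ (0,1)^n : δ/(x_1^{m_1}···x_n^{m_n}) < 1}} δ/(x_1^{m_1}···x_n^{m_n}) dx ≤ C' · |{x ∈ (0,1)^n : x_1^{m_1}···x_n^{m_n} < δ}|. -/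
open MeasureTheory Set
open scoped ENNReal

lemma scale_aux {n : ℕ} (m : Fin n → ℝ) (hm : ∀ i, 0 ≤ m i) (M : ℝ) (hMpos : 0 < M)
    (j : Fin n) (hj : m j = M) (s lam : ℝ) (hlam : 1 ≤ lam) :
    volume {x : Fin n → ℝ | (∀ i, x i ∈ Set.Ioo (0:ℝ) 1) ∧ (∏ i, x i ^ m i) < lam * s}
      ≤ ENNReal.ofReal (lam ^ (1/M)) *
        volume {x : Fin n → ℝ | (∀ i, x i ∈ Set.Ioo (0:ℝ) 1) ∧ (∏ i, x i ^ m i) < s} := by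
  classical
  have hlam0 : (0:ℝ) < lam := lt_of_lt_of_le one_pos hlam
  set c : ℝ := lam ^ (-(1/M)) with hc
  have hc0 : 0 < c := Real.rpow_pos_of_pos hlam0 _
  have hc1 : c ≤ 1 := Real.rpow_le_one_of_one_le_of_nonpos hlam
    (neg_nonpos.mpr (by positivity))
  set D : Matrix (Fin n) (Fin n) ℝ := Matrix.diagonal (fun i => if i = j then c else 1) with hD
  set L := Matrix.toLin' D with hLdef
  have hdet : LinearMap.det L = c := by
    rw [hLdef, LinearMap.det_toLin', hD, Matrix.det_diagonal,
      Finset.prod_ite_eq' Finset.univ j (fun _ => c)]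
    simp
  have hL : ∀ (x : Fin n → ℝ) (i), L x i = (if i = j then c else 1) * x i := by
    intro x i
    simp [hLdef, hD, Matrix.toLin'_apply, Matrix.mulVec_diagonal]
  have hcM : c ^ M = lam⁻¹ := by
    rw [hc, ← Real.rpow_mul hlam0.le]
    rw [show -(1/M) * M = -1 by field_simp]
    exact Real.rpow_neg_one lam
  have himg : L '' {x : Fin n → ℝ | (∀ i, x i ∈ Set.Ioo (0:ℝ) 1) ∧ (∏ i, x i ^ m i) < lam * s}
      ⊆ {x : Fin n → ℝ | (∀ i, x i ∈ Set.Ioo (0:ℝ) 1) ∧ (∏ i, x i ^ m i) < s} := by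
    rintro _ ⟨x, ⟨hcube, hfx⟩, rfl⟩
    have hx0 : ∀ i, (0:ℝ) ≤ x i := fun i => (hcube i).1.le
    constructor
    · intro i
      rw [hL]
      by_cases hij : i = j
      · subst hij
        refine ⟨by simp [mul_pos hc0 (hcube i).1], ?_⟩
        simp only [if_pos rfl]
        calc c * x i ≤ 1 * x i := mul_le_mul_of_nonneg_right hc1 (hx0 i)
          _ = x i := one_mul _
          _ < 1 := (hcube i).2
      · simpa [hij] using hcube i
    · have hprod : ∏ i, (L x i) ^ m i
          = (∏ i, ((if i = j then c else 1):ℝ) ^ m i) * ∏ i, x i ^ m i := by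
        rw [← Finset.prod_mul_distrib]
        refine Finset.prod_congr rfl fun i _ => ?_
        rw [hL, Real.mul_rpow (by split <;> [exact hc0.le; exact zero_le_one]) (hx0 i)]
      have h1 : (∏ i, ((if i = j then c else 1):ℝ) ^ m i) = c ^ M := by
        have he : ∀ i : Fin n, ((if i = j then c else 1):ℝ) ^ m i
            = if i = j then c ^ m j else 1 := by
          intro i; by_cases hij : i = j <;> simp [hij, Real.one_rpow]
        simp_rw [he]
        rw [Finset.prod_ite_eq' Finset.univ j (fun _ => c ^ m j)]
        simp [hj]
      show (∏ i, (L x i) ^ m i) < s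
      rw [hprod, h1, hcM]
      calc lam⁻¹ * ∏ i, x i ^ m i < lam⁻¹ * (lam * s) :=
            mul_lt_mul_of_pos_left hfx (inv_pos.mpr hlam0)
        _ = s := by field_simp
  have key := measure_mono (μ := (volume : Measure (Fin n → ℝ))) himg
  rw [Measure.addHaar_image_linearMap volume L _, hdet, abs_of_pos hc0] at key
  have hcinv : ENNReal.ofReal c = (ENNReal.ofReal (lam ^ (1/M)))⁻¹ := by
    rw [hc, show -(1/M) = -(1/M) from rfl, Real.rpow_neg hlam0.le,
      ENNReal.ofReal_inv_of_pos (Real.rpow_pos_of_pos hlam0 _)]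
  have hne0 : ENNReal.ofReal (lam ^ (1/M)) ≠ 0 :=
    (ENNReal.ofReal_pos.mpr (Real.rpow_pos_of_pos hlam0 _)).ne'
  calc volume {x : Fin n → ℝ | (∀ i, x i ∈ Set.Ioo (0:ℝ) 1) ∧ (∏ i, x i ^ m i) < lam * s}
      = ENNReal.ofReal (lam ^ (1/M)) * (ENNReal.ofReal c *
          volume {x : Fin n → ℝ | (∀ i, x i ∈ Set.Ioo (0:ℝ) 1) ∧ (∏ i, x i ^ m i) < lam * s}) := by
        rw [hcinv, ← mul_assoc, ENNReal.mul_inv_cancel hne0 ENNReal.ofReal_ne_top, one_mul]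
    _ ≤ ENNReal.ofReal (lam ^ (1/M)) *
          volume {x : Fin n → ℝ | (∀ i, x i ∈ Set.Ioo (0:ℝ) 1) ∧ (∏ i, x i ^ m i) < s} :=
        mul_le_mul_right key _


theorem integral_monomial_exponent_large
    {n : ℕ} (m : Fin n → ℝ) (hm : ∀ i, 0 ≤ m i)
    (M : ℝ) (hM : IsGreatest (Set.range m) M) (hM1 : 1 < M) :
    ∃ C' > (0:ℝ), ∀ δ : ℝ, 0 < δ → δ < 1 →
      (∫ x in {x : Fin n → ℝ |
          (∀ i, x i ∈ Set.Ioo (0:ℝ) 1) ∧ δ / (∏ i, x i ^ m i) < 1},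
        δ / (∏ i, x i ^ m i)) ≤
      C' * (volume {x : Fin n → ℝ |
          (∀ i, x i ∈ Set.Ioo (0:ℝ) 1) ∧ (∏ i, x i ^ m i) < δ}).toReal := by
  classical
  obtain ⟨⟨j, hj⟩, hub⟩ := hM
  have hMpos : (0:ℝ) < M := lt_trans one_pos hM1
  have hFmeas : Measurable fun x : Fin n → ℝ => ∏ i, x i ^ m i :=
    Finset.measurable_prod _ fun i _ =>
      (Real.continuous_rpow_const (hm i)).measurable.comp (measurable_pi_apply i)
  have hcube_meas : MeasurableSet {x : Fin n → ℝ | ∀ i, x i ∈ Set.Ioo (0:ℝ) 1} := by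
    rw [show {x : Fin n → ℝ | ∀ i, x i ∈ Set.Ioo (0:ℝ) 1}
        = Set.pi Set.univ (fun _ => Set.Ioo (0:ℝ) 1) from by ext x; simp [Set.mem_pi]]
    exact MeasurableSet.pi (Set.to_countable _) fun i _ => measurableSet_Ioo
  -- constants
  set r : ℝ := (2:ℝ) ^ (1/M - 1) with hr
  have hr0 : 0 < r := Real.rpow_pos_of_pos two_pos _
  have hr1 : r < 1 := by
    apply Real.rpow_lt_one_of_one_lt_of_neg one_lt_two
    have : 1/M < 1 := by
      rw [div_lt_one hMpos]; exact hM1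
    linarith
  set q : ℝ≥0∞ := ENNReal.ofReal r with hqdef
  have hq1 : q < 1 := by
    rw [hqdef]; exact ENNReal.ofReal_lt_one.mpr hr1
  set a : ℝ≥0∞ := ENNReal.ofReal ((2:ℝ) ^ (1/M : ℝ)) with hadef
  set Ce : ℝ≥0∞ := a * (1 - q)⁻¹ with hCe
  have h1q0 : (1:ℝ≥0∞) - q ≠ 0 :=
    fun h => absurd hq1 (not_lt.mpr (tsub_eq_zero_iff_le.mp h))
  have h1qtop : (1:ℝ≥0∞) - q ≠ ⊤ := by
    exact ne_top_of_le_ne_top ENNReal.one_ne_top tsub_le_self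
  have hCetop : Ce ≠ ⊤ :=
    ENNReal.mul_ne_top ENNReal.ofReal_ne_top (ENNReal.inv_ne_top.mpr h1q0)
  have hCe0 : Ce ≠ 0 :=
    mul_ne_zero (ENNReal.ofReal_pos.mpr (Real.rpow_pos_of_pos two_pos _)).ne'
      (ENNReal.inv_ne_zero.mpr h1qtop)
  refine ⟨Ce.toReal, ENNReal.toReal_pos hCe0 hCetop, ?_⟩
  intro δ hδ0 hδ1
  set S := {x : Fin n → ℝ |
      (∀ i, x i ∈ Set.Ioo (0:ℝ) 1) ∧ δ / (∏ i, x i ^ m i) < 1} with hSdef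
  have hFpos : ∀ x : Fin n → ℝ, (∀ i, x i ∈ Set.Ioo (0:ℝ) 1) → 0 < ∏ i, x i ^ m i :=
    fun x hx => Finset.prod_pos fun i _ => Real.rpow_pos_of_pos (hx i).1 _
  have hS_meas : MeasurableSet S := by
    rw [hSdef, Set.setOf_and]
    exact hcube_meas.inter (measurableSet_lt (measurable_const.div hFmeas) measurable_const)
  -- shells
  set A : ℕ → Set (Fin n → ℝ) := fun k => {x : Fin n → ℝ |
      (∀ i, x i ∈ Set.Ioo (0:ℝ) 1) ∧ 2^k * δ ≤ (∏ i, x i ^ m i) ∧ (∏ i, x i ^ m i) < 2^(k+1) * δ}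
    with hAdef
  have hA_meas : ∀ k, MeasurableSet (A k) := by
    intro k
    rw [hAdef]
    simp only [Set.setOf_and]
    exact hcube_meas.inter ((measurableSet_le measurable_const hFmeas).inter
      (measurableSet_lt hFmeas measurable_const))
  have hSsub : S ⊆ ⋃ k, A k := by
    intro x hx
    obtain ⟨hcube, hdiv⟩ := hx
    have hFx : 0 < ∏ i, x i ^ m i := hFpos x hcube
    have hδF : δ < ∏ i, x i ^ m i := by
      rwa [div_lt_one hFx] at hdiv
    have hex : ∃ k : ℕ, (∏ i, x i ^ m i) < 2^(k+1) * δ := by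
      obtain ⟨N, hN⟩ := pow_unbounded_of_one_lt ((∏ i, x i ^ m i) / δ) (one_lt_two (α := ℝ))
      refine ⟨N, ?_⟩
      have : (∏ i, x i ^ m i) < 2^N * δ := by
        rw [div_lt_iff₀ hδ0] at hN; linarith
      have h2 : (2:ℝ)^N * δ ≤ 2^(N+1) * δ := by
        have : (2:ℝ)^N ≤ 2^(N+1) := pow_le_pow_right₀ one_le_two (Nat.le_succ N)
        nlinarith
      linarith
    set K := Nat.find hex with hK
    refine Set.mem_iUnion.mpr ⟨K, hcube, ?_, Nat.find_spec hex⟩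
    rcases Nat.eq_zero_or_pos K with h0 | hpos
    · rw [h0]; simpa using hδF.le
    · obtain ⟨k, hk⟩ := Nat.exists_eq_add_of_lt hpos
      have hmin : ¬ ((∏ i, x i ^ m i) < 2^(K-1+1) * δ) := Nat.find_min hex (by omega)
      have : K - 1 + 1 = K := by omega
      rw [this] at hmin
      linarith [not_lt.mp hmin]
  have hAsubT : ∀ k, A k ⊆ {x : Fin n → ℝ |
      (∀ i, x i ∈ Set.Ioo (0:ℝ) 1) ∧ (∏ i, x i ^ m i) < 2^(k+1) * δ} :=
    fun k x hx => ⟨hx.1, hx.2.2⟩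
  -- volume of target set is finite
  have hVtop : volume {x : Fin n → ℝ |
      (∀ i, x i ∈ Set.Ioo (0:ℝ) 1) ∧ (∏ i, x i ^ m i) < δ} ≠ ⊤ := by
    have hle : volume {x : Fin n → ℝ |
        (∀ i, x i ∈ Set.Ioo (0:ℝ) 1) ∧ (∏ i, x i ^ m i) < δ}
        ≤ volume {x : Fin n → ℝ | ∀ i, x i ∈ Set.Ioo (0:ℝ) 1} :=
      measure_mono (fun x hx => hx.1)
    have hone : volume {x : Fin n → ℝ | ∀ i, x i ∈ Set.Ioo (0:ℝ) 1} = 1 := by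
      rw [show {x : Fin n → ℝ | ∀ i, x i ∈ Set.Ioo (0:ℝ) 1}
          = Set.pi Set.univ (fun _ => Set.Ioo (0:ℝ) 1) from by ext x; simp [Set.mem_pi],
        volume_pi_pi]
      simp [Real.volume_Ioo]
    exact ne_top_of_le_ne_top (hone ▸ ENNReal.one_ne_top) hle
  -- convert Bochner integral to lintegral
  have hnn : 0 ≤ᵐ[volume.restrict S] fun x : Fin n → ℝ => δ / (∏ i, x i ^ m i) :=
    ae_restrict_of_forall_mem hS_meas fun x hx => (div_pos hδ0 (hFpos x hx.1)).le
  rw [integral_eq_lintegral_of_nonneg_ae hnn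
    ((measurable_const.div hFmeas).aestronglyMeasurable)]
  -- the main lintegral bound
  set Vδ := volume {x : Fin n → ℝ |
      (∀ i, x i ∈ Set.Ioo (0:ℝ) 1) ∧ (∏ i, x i ^ m i) < δ} with hVδ
  have hcoef : ∀ k : ℕ, ((2:ℝ)^k)⁻¹ * ((2:ℝ)^(k+1)) ^ (1/M : ℝ) = (2:ℝ)^(1/M : ℝ) * r^k := by
    intro k
    rw [hr, ← Real.rpow_natCast (2:ℝ) k, ← Real.rpow_natCast (2:ℝ) (k+1),
      ← Real.rpow_neg (by norm_num : (0:ℝ) ≤ 2), ← Real.rpow_mul (by norm_num : (0:ℝ) ≤ 2),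
      ← Real.rpow_natCast ((2:ℝ) ^ (1/M - 1)) k, ← Real.rpow_mul (by norm_num : (0:ℝ) ≤ 2),
      ← Real.rpow_add two_pos, ← Real.rpow_add two_pos]
    congr 1
    push_cast
    ring
  have hmain : (∫⁻ x in S, ENNReal.ofReal (δ / (∏ i, x i ^ m i))) ≤ Ce * Vδ := by
    calc (∫⁻ x in S, ENNReal.ofReal (δ / (∏ i, x i ^ m i)))
        ≤ ∫⁻ x in ⋃ k, A k, ENNReal.ofReal (δ / (∏ i, x i ^ m i)) :=
          lintegral_mono_set hSsub
      _ ≤ ∑' k, ∫⁻ x in A k, ENNReal.ofReal (δ / (∏ i, x i ^ m i)) :=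
          lintegral_iUnion_le _ _
      _ ≤ ∑' k, ENNReal.ofReal (((2:ℝ)^k)⁻¹) * volume (A k) := by
          refine ENNReal.tsum_le_tsum fun k => ?_
          calc (∫⁻ x in A k, ENNReal.ofReal (δ / (∏ i, x i ^ m i)))
              ≤ ∫⁻ _x in A k, ENNReal.ofReal (((2:ℝ)^k)⁻¹) := by
                refine setLIntegral_mono' (hA_meas k) fun x hx => ?_
                refine ENNReal.ofReal_le_ofReal ?_
                obtain ⟨hcube, hlo, _⟩ := hx
                have h2k : (0:ℝ) < 2^k * δ := by positivity
                calc δ / (∏ i, x i ^ m i) ≤ δ / (2^k * δ) :=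
                      div_le_div_of_nonneg_left hδ0.le h2k hlo
                  _ = ((2:ℝ)^k)⁻¹ := by field_simp
            _ = ENNReal.ofReal (((2:ℝ)^k)⁻¹) * volume (A k) := setLIntegral_const _ _
      _ ≤ ∑' k, ENNReal.ofReal (((2:ℝ)^k)⁻¹) *
            (ENNReal.ofReal (((2:ℝ)^(k+1)) ^ (1/M : ℝ)) * Vδ) := by
          refine ENNReal.tsum_le_tsum fun k => ?_
          refine mul_le_mul_right ?_ _
          calc volume (A k) ≤ volume {x : Fin n → ℝ |
                (∀ i, x i ∈ Set.Ioo (0:ℝ) 1) ∧ (∏ i, x i ^ m i) < 2^(k+1) * δ} :=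
                measure_mono (hAsubT k)
            _ ≤ ENNReal.ofReal (((2:ℝ)^(k+1)) ^ (1/M : ℝ)) * Vδ := by
                rw [hVδ]
                exact scale_aux m hm M hMpos j hj δ (2^(k+1))
                  (one_le_pow₀ (one_le_two (α := ℝ)))
      _ = ∑' k, (a * Vδ) * q^k := by
          refine tsum_congr fun k => ?_
          rw [← mul_assoc, ← ENNReal.ofReal_mul (by positivity), hcoef k,
            ENNReal.ofReal_mul (by positivity), hqdef, ← ENNReal.ofReal_pow hr0.le, hadef]
          ring
      _ = (a * Vδ) * (1 - q)⁻¹ := by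
          rw [ENNReal.tsum_mul_left, ENNReal.tsum_geometric]
      _ = Ce * Vδ := by rw [hCe]; ring
  calc (∫⁻ x in S, ENNReal.ofReal (δ / (∏ i, x i ^ m i))).toReal
      ≤ (Ce * Vδ).toReal :=
        ENNReal.toReal_mono (ENNReal.mul_ne_top hCetop hVtop) hmain
    _ = Ce.toReal * Vδ.toReal := ENNReal.toReal_mul
end

section
/- Let f be a polynomial in n variables with f(0) = 0 and ∇f(0) = 0, weighted-homogeneous of degree a > 0 with respect to positive weights α_1,...,α_n (i.e. f(t^{α_1}y_1,...,t^{α_n}y_n) = t^a f(y)). If y ∈ (ℝ \ {0})^n is a point at which f(y) ≠ 0 or f has a zero of order exactly 1 (some first partial nonvanishing), then there exist indices i, j such that the second partial derivative ∂²f/∂x_i∂x_j does not vanish at y. -/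
open MvPolynomial Filter Topology

/-- Chain rule for `pderiv` under a diagonal scaling substitution. -/
private lemma whsp_pderiv_bind₁ {n : ℕ} (c : Fin n → ℝ) (j : Fin n)
    (f : MvPolynomial (Fin n) ℝ) :
    pderiv j (bind₁ (fun i => (C (c i) : MvPolynomial (Fin n) ℝ) * X i) f)
      = C (c j) * bind₁ (fun i => (C (c i) : MvPolynomial (Fin n) ℝ) * X i) (pderiv j f) := by
  induction f using MvPolynomial.induction_on with
  | C a => simp
  | add p q hp hq => simp [hp, hq, mul_add]
  | mul_X p i hp =>
      by_cases h : j = i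
      · subst h
        simp only [map_mul, bind₁_X_right, pderiv_mul, pderiv_C_mul, pderiv_C,
          pderiv_X_self, mul_one, map_add, map_zero, zero_mul, mul_zero, add_zero, hp]
        ring
      · simp only [map_mul, bind₁_X_right, pderiv_mul, pderiv_C_mul, pderiv_C,
          pderiv_X_of_ne (Ne.symm h), mul_one, map_add, map_zero, zero_mul, mul_zero,
          add_zero, hp]
        ring

/-- Evaluation of `eval x (bind₁ s g)` for the scaling substitution. -/
private lemma whsp_eval_bind₁ {n : ℕ} (c : Fin n → ℝ) (g : MvPolynomial (Fin n) ℝ)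
    (x : Fin n → ℝ) :
    eval x (bind₁ (fun i => (C (c i) : MvPolynomial (Fin n) ℝ) * X i) g)
      = eval (fun i => c i * x i) g := by
  induction g using MvPolynomial.induction_on with
  | C a => simp
  | add p q hp hq => simp [hp, hq]
  | mul_X p i hp => simp [hp]

/-- Derivative at `t = 1` of `t ↦ g (t ^ α • z)`. -/
private lemma whsp_hasDerivAt {n : ℕ} (α : Fin n → ℝ) (z : Fin n → ℝ)
    (g : MvPolynomial (Fin n) ℝ) :
    HasDerivAt (fun t : ℝ => eval (fun i => t ^ α i * z i) g)
      (∑ i, α i * z i * eval z (pderiv i g)) 1 := by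
  induction g using MvPolynomial.induction_on with
  | C a => simpa using hasDerivAt_const (1 : ℝ) a
  | add p q hp hq =>
      have h := hp.add hq
      simp only [map_add] at h ⊢
      simpa [mul_add, Finset.sum_add_distrib, Pi.add_def] using h
  | mul_X p i hp =>
      have hx : HasDerivAt (fun t : ℝ => t ^ α i * z i) (α i * z i) 1 := by
        have h1 := (Real.hasDerivAt_rpow_const (x := (1 : ℝ)) (p := α i)
          (Or.inl one_ne_zero)).mul_const (z i)
        simpa using h1
      have hm := hp.mul hx
      have hval : (fun i : Fin n => (1 : ℝ) ^ α i * z i) = z := by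
        funext i; simp [Real.one_rpow]
      rw [hval] at hm
      have key : ∑ k, α k * z k * eval z (pderiv k (p * X i))
          = (∑ k, α k * z k * eval z (pderiv k p)) * ((1 : ℝ) ^ α i * z i)
            + eval z p * (α i * z i) := by
        have hterm : ∀ k : Fin n, α k * z k * eval z (pderiv k (p * X i))
            = (α k * z k * eval z (pderiv k p)) * z i
              + (if i = k then α k * z k * eval z p else 0) := by
          intro k
          by_cases h : k = i
          · subst h
            rw [if_pos rfl]
            simp only [pderiv_mul, pderiv_X_self, mul_one, map_add, map_mul, eval_X]
            ring
          · rw [if_neg (show ¬ i = k from fun hik => h hik.symm)]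
            simp only [pderiv_mul, pderiv_X_of_ne (Ne.symm h), mul_zero, add_zero,
              map_mul, eval_X]
            ring
        rw [Finset.sum_congr rfl (fun k _ => hterm k), Finset.sum_add_distrib,
          Finset.sum_ite_eq, ← Finset.sum_mul]
        simp only [Finset.mem_univ, if_true, Real.one_rpow, one_mul]
        ring
      rw [key]
      have hfun : (fun t : ℝ => eval (fun i' => t ^ α i' * z i') (p * X i))
          = fun t : ℝ => eval (fun i' => t ^ α i' * z i') p * (t ^ α i * z i) := by
        funext t; simp
      rw [hfun]
      exact hm

/-- Euler's identity for weighted homogeneous (as functions, for `t > 0`) polynomials. -/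
private lemma whsp_euler {n : ℕ} (α : Fin n → ℝ) (g : MvPolynomial (Fin n) ℝ) (b : ℝ)
    (hg : ∀ t : ℝ, 0 < t → ∀ y : Fin n → ℝ,
      eval (fun i => t ^ α i * y i) g = t ^ b * eval y g)
    (z : Fin n → ℝ) :
    ∑ i, α i * z i * eval z (pderiv i g) = b * eval z g := by
  have h1 := whsp_hasDerivAt α z g
  have h2 : HasDerivAt (fun t : ℝ => t ^ b * eval z g) (b * eval z g) 1 := by
    have h := (Real.hasDerivAt_rpow_const (x := (1 : ℝ)) (p := b)
      (Or.inl one_ne_zero)).mul_const (eval z g)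
    simpa using h
  have heq : (fun t : ℝ => eval (fun i => t ^ α i * z i) g)
      =ᶠ[𝓝 (1 : ℝ)] (fun t : ℝ => t ^ b * eval z g) := by
    filter_upwards [isOpen_Ioi.mem_nhds (by norm_num : (1 : ℝ) ∈ Set.Ioi (0 : ℝ))] with t ht
    exact hg t ht z
  exact h1.unique (h2.congr_of_eventuallyEq heq)

/-- The partial derivatives of a weighted homogeneous polynomial are again
weighted homogeneous, of degree `b - α j`. -/
private lemma whsp_hom_pderiv {n : ℕ} (α : Fin n → ℝ)
    (g : MvPolynomial (Fin n) ℝ) (b : ℝ)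
    (hg : ∀ t : ℝ, 0 < t → ∀ y : Fin n → ℝ,
      eval (fun i => t ^ α i * y i) g = t ^ b * eval y g) (j : Fin n) :
    ∀ t : ℝ, 0 < t → ∀ y : Fin n → ℝ,
      eval (fun i => t ^ α i * y i) (pderiv j g)
        = t ^ (b - α j) * eval y (pderiv j g) := by
  intro t ht y
  have hpoly : bind₁ (fun i => (C (t ^ α i) : MvPolynomial (Fin n) ℝ) * X i) g
      = C (t ^ b) * g := by
    apply MvPolynomial.funext
    intro x
    rw [whsp_eval_bind₁]
    simpa using hg t ht x
  have h2 := congrArg (pderiv j) hpoly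
  rw [whsp_pderiv_bind₁, pderiv_C_mul] at h2
  have h3 := congrArg (eval y) h2
  rw [map_mul, map_mul, whsp_eval_bind₁, eval_C, eval_C] at h3
  have hne : (t : ℝ) ^ α j ≠ 0 := (Real.rpow_pos_of_pos ht _).ne'
  rw [Real.rpow_sub ht]
  field_simp
  linarith [h3]

/-- A weighted homogeneous polynomial of degree `0` vanishing at the
origin vanishes everywhere. -/
private lemma whsp_nonconst {n : ℕ} (α : Fin n → ℝ) (hα : ∀ i, 0 < α i)
    (g : MvPolynomial (Fin n) ℝ) (hg0 : eval (0 : Fin n → ℝ) g = 0)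
    (hg : ∀ t : ℝ, 0 < t → ∀ y : Fin n → ℝ,
      eval (fun i => t ^ α i * y i) g = eval y g)
    (y : Fin n → ℝ) : eval y g = 0 := by
  have hcoord : Tendsto (fun t : ℝ => (fun i => t ^ α i * y i)) (𝓝[>] (0 : ℝ))
      (𝓝 (0 : Fin n → ℝ)) := by
    rw [tendsto_pi_nhds]
    intro i
    have h1 : Tendsto (fun t : ℝ => t ^ α i) (𝓝 (0 : ℝ)) (𝓝 ((0 : ℝ) ^ α i)) :=
      (Real.continuousAt_rpow_const 0 (α i) (Or.inr (hα i).le))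
    have h2 : Tendsto (fun t : ℝ => t ^ α i * y i) (𝓝 (0 : ℝ))
        (𝓝 ((0 : ℝ) ^ α i * y i)) := h1.mul_const (y i)
    have h3 : (0 : ℝ) ^ α i * y i = 0 := by
      rw [Real.zero_rpow (hα i).ne', zero_mul]
    rw [h3] at h2
    exact h2.mono_left nhdsWithin_le_nhds
  have hc : Tendsto (fun t : ℝ => eval (fun i => t ^ α i * y i) g) (𝓝[>] (0 : ℝ))
      (𝓝 (eval (0 : Fin n → ℝ) g)) :=
    ((MvPolynomial.continuous_eval g).tendsto _).comp hcoord
  have hconst : Tendsto (fun t : ℝ => eval (fun i => t ^ α i * y i) g) (𝓝[>] (0 : ℝ))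
      (𝓝 (eval y g)) := by
    apply Tendsto.congr' _ tendsto_const_nhds
    filter_upwards [self_mem_nhdsWithin] with t ht
    exact (hg t ht y).symm
  rw [← hg0]
  exact tendsto_nhds_unique hconst hc

theorem weighted_homogeneous_second_partial
    {n : ℕ} (f : MvPolynomial (Fin n) ℝ)
    (h0 : eval (0 : Fin n → ℝ) f = 0)
    (h1 : ∀ i, eval (0 : Fin n → ℝ) (pderiv i f) = 0)
    (α : Fin n → ℝ) (hα : ∀ i, 0 < α i) (a : ℝ) (ha : 0 < a)
    (hhom : ∀ t : ℝ, 0 < t → ∀ y : Fin n → ℝ,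
      eval (fun i => t ^ α i * y i) f = t ^ a * eval y f)
    (y : Fin n → ℝ) (hy : ∀ i, y i ≠ 0)
    (hzero : eval y f ≠ 0 ∨ ∃ i, eval y (pderiv i f) ≠ 0) :
    ∃ i j, eval y (pderiv i (pderiv j f)) ≠ 0 := by
  obtain ⟨j, hj⟩ : ∃ j, eval y (pderiv j f) ≠ 0 := by
    rcases hzero with hf | h
    · have hsum : ∑ i, α i * y i * eval y (pderiv i f) ≠ 0 := by
        rw [whsp_euler α f a hhom y]
        exact mul_ne_zero ha.ne' hf
      obtain ⟨i, -, hi⟩ := Finset.exists_ne_zero_of_sum_ne_zero hsum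
      exact ⟨i, fun hz => hi (by rw [hz, mul_zero])⟩
    · exact h
  have hghom := whsp_hom_pderiv α f a hhom j
  have hb : a - α j ≠ 0 := by
    intro hb0
    apply hj
    apply whsp_nonconst α hα (pderiv j f) (h1 j)
    intro t ht y'
    simpa [hb0, Real.rpow_zero] using hghom t ht y'
  have hsum : ∑ i, α i * y i * eval y (pderiv i (pderiv j f)) ≠ 0 := by
    rw [whsp_euler α (pderiv j f) (a - α j) hghom y]
    exact mul_ne_zero hb hj
  obtain ⟨i, -, hi⟩ := Finset.exists_ne_zero_of_sum_ne_zero hsum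
  exact ⟨i, j, fun hz => hi (by rw [hz, mul_zero])⟩
end

section
/- Let f be a smooth function on a neighborhood of 0 in ℝⁿ with f(0) = 0, ∇f(0) = 0, and nonvanishing Taylor expansion at 0. Suppose that for every pair of directions u, v, the determinant of the 2×2 Hessian of f in the u, v directions vanishes to infinite order at the origin. Then every vertex of the Newton polyhedron N(f) lies on a coordinate axis, and there is a single number m > 1 such that every vertex lies at height m on its coordinate axis. -/
open MeasureTheory Topology Filter Classical

open scoped Classical

noncomputable section

/-- Partial derivative in the `i`-th coordinate direction. -/
def pD {n : ℕ} (i : Fin n) (g : (Fin n → ℝ) → ℝ) : (Fin n → ℝ) → ℝ :=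
  fun x => fderiv ℝ g x (Pi.single i 1)

/-- Iterated mixed partial derivative `∂^α`. -/
def multiD {n : ℕ} (α : Fin n → ℕ) (g : (Fin n → ℝ) → ℝ) : (Fin n → ℝ) → ℝ :=
  ((List.ofFn fun i : Fin n => (pD i)^[α i]).foldr (· ∘ ·) id) g

/-- Taylor coefficient `f_α` of `f` at the origin. -/
def tCoeff {n : ℕ} (f : (Fin n → ℝ) → ℝ) (α : Fin n → ℕ) : ℝ :=
  multiD α f 0 / ((∏ i, Nat.factorial (α i) : ℕ) : ℝ)

/-- The Newton polyhedron of `f`: the convex hull of the octants with corners at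
exponents of nonzero Taylor coefficients. -/
def newtonPoly {n : ℕ} (f : (Fin n → ℝ) → ℝ) : Set (Fin n → ℝ) :=
  convexHull ℝ {x | ∃ α : Fin n → ℕ, tCoeff f α ≠ 0 ∧ ∀ i, (α i : ℝ) ≤ x i}

/-- The vertices (extreme points) of the Newton polyhedron. -/
def vertices {n : ℕ} (f : (Fin n → ℝ) → ℝ) : Set (Fin n → ℝ) :=
  Set.extremePoints ℝ (newtonPoly f)

/-- A compact face of the Newton polyhedron of `f`. -/
def IsCompactFace {n : ℕ} (f : (Fin n → ℝ) → ℝ) (F : Set (Fin n → ℝ)) : Prop :=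
  F.Nonempty ∧ IsExtreme ℝ (newtonPoly f) F ∧ IsCompact F

/-- The face polynomial `f_F(x) = ∑_{α ∈ F} f_α x^α`. -/
def facePoly {n : ℕ} (f : (Fin n → ℝ) → ℝ) (F : Set (Fin n → ℝ)) :
    (Fin n → ℝ) → ℝ :=
  fun x => ∑' α : Fin n → ℕ,
    if (fun i => (α i : ℝ)) ∈ F then tCoeff f α * ∏ i, x i ^ α i else 0

/-- The directional derivative of `g` in direction `u`. -/
def dirD {n : ℕ} (u : Fin n → ℝ) (g : (Fin n → ℝ) → ℝ) : (Fin n → ℝ) → ℝ :=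
  fun x => fderiv ℝ g x u

/-- The determinant of the 2×2 Hessian of `f` in the directions `u`, `v`. -/
def hessDet2 {n : ℕ} (f : (Fin n → ℝ) → ℝ) (u v : Fin n → ℝ) :
    (Fin n → ℝ) → ℝ :=
  fun x => dirD u (dirD u f) x * dirD v (dirD v f) x - (dirD u (dirD v f) x) ^ 2

/-- `g` vanishes to infinite order at the origin. -/
def VanishesInfOrder {n : ℕ} (g : (Fin n → ℝ) → ℝ) : Prop :=
  ∀ k : ℕ, iteratedFDeriv ℝ k g 0 = 0

/-! ### Auxiliary analysis lemmas -/

section Aux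

variable {n : ℕ}

lemma contDiff_pD {g : (Fin n → ℝ) → ℝ} (hg : ContDiff ℝ (⊤ : ℕ∞) g) (i : Fin n) :
    ContDiff ℝ (⊤ : ℕ∞) (pD i g) :=
  (hg.fderiv_right (le_refl _)).clm_apply contDiff_const

lemma pD_comm {g : (Fin n → ℝ) → ℝ} (hg : ContDiff ℝ (⊤ : ℕ∞) g) (a b : Fin n) :
    pD a (pD b g) = pD b (pD a g) := by
  funext x
  have hdg : Differentiable ℝ g := hg.differentiable (by simp)
  have hdfg : Differentiable ℝ (fderiv ℝ g) :=
    (hg.fderiv_right (m := (⊤ : ℕ∞)) (le_refl _)).differentiable (by simp)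
  have key : ∀ v w : Fin n → ℝ,
      fderiv ℝ (fun y => fderiv ℝ g y w) x v = fderiv ℝ (fderiv ℝ g) x v w := by
    intro v w
    have := fderiv_clm_apply (hdfg x) (differentiableAt_const w)
    simp only [fderiv_const_apply, Pi.zero_apply, ContinuousLinearMap.comp_zero, zero_add] at this
    rw [this]
    rfl
  have sym : fderiv ℝ (fderiv ℝ g) x (Pi.single a 1) (Pi.single b 1)
      = fderiv ℝ (fderiv ℝ g) x (Pi.single b 1) (Pi.single a 1) :=
    second_derivative_symmetric (fun y => (hdg y).hasFDerivAt)
      ((hdfg x).hasFDerivAt) _ _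
  show fderiv ℝ (fun y => fderiv ℝ g y (Pi.single b 1)) x (Pi.single a 1)
      = fderiv ℝ (fun y => fderiv ℝ g y (Pi.single a 1)) x (Pi.single b 1)
  rw [key, key, sym]

lemma vio_pD {g : (Fin n → ℝ) → ℝ} (hg : ContDiff ℝ (⊤ : ℕ∞) g) (hv : VanishesInfOrder g)
    (i : Fin n) : VanishesInfOrder (pD i g) := by
  intro k
  have hfd : iteratedFDeriv ℝ k (fderiv ℝ g) 0 = 0 := by
    have h := iteratedFDeriv_succ_eq_comp_right (𝕜 := ℝ) (f := g) (x := (0 : Fin n → ℝ)) (n := k)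
    have h2 := hv (k + 1)
    rw [h] at h2
    simp only [Function.comp_apply] at h2
    have := congrArg (continuousMultilinearCurryRightEquiv' ℝ k (Fin n → ℝ) ℝ) h2
    simp at this
    exact this.trans (LinearIsometryEquiv.map_zero _)
  have : pD i g = (ContinuousLinearMap.apply ℝ ℝ (Pi.single i 1 : Fin n → ℝ)) ∘ (fderiv ℝ g) := rfl
  rw [this, ContinuousLinearMap.iteratedFDeriv_comp_left _ (hg.fderiv_right (m := (⊤ : ℕ∞)) (le_refl _)).contDiffAt (by exact_mod_cast le_top),
    hfd]
  ext m
  simp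

lemma vio_zero {g : (Fin n → ℝ) → ℝ} (hv : VanishesInfOrder g) : g 0 = 0 := by
  have h := hv 0
  have := congrFun (congrArg DFunLike.coe h) (fun _ : Fin 0 => (0 : Fin n → ℝ))
  simpa using this

/-- iterated directional derivative along a list of coordinates -/
def DL : List (Fin n) → ((Fin n → ℝ) → ℝ) → ((Fin n → ℝ) → ℝ)
  | [], g => g
  | a :: L, g => pD a (DL L g)

@[simp] lemma DL_nil (g : (Fin n → ℝ) → ℝ) : DL [] g = g := rfl
@[simp] lemma DL_cons (a : Fin n) (L : List (Fin n)) (g) : DL (a :: L) g = pD a (DL L g) := rfl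

lemma DL_append (L₁ L₂ : List (Fin n)) (g) : DL (L₁ ++ L₂) g = DL L₁ (DL L₂ g) := by
  induction L₁ with
  | nil => rfl
  | cons a L ih => simp [DL, ih]

/-- the canonical list representing a multi-index -/
def rep (α : Fin n → ℕ) : List (Fin n) :=
  (List.finRange n).flatMap (fun k => List.replicate (α k) k)

lemma count_rep (α : Fin n → ℕ) (k : Fin n) : (rep α).count k = α k := by
  unfold rep
  rw [List.count_flatMap]
  rw [show (List.count k ∘ fun k' => List.replicate (α k') k') =
    fun k' => if k = k' then α k' else 0 by
      funext k'
      simp [List.count_replicate]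
      split <;> simp_all [eq_comm]]
  rw [← Fin.sum_univ_def]
  simp

lemma foldr_comp_apply (l : List (((Fin n → ℝ) → ℝ) → ((Fin n → ℝ) → ℝ))) (g) :
    (l.foldr (· ∘ ·) id) g = l.foldr (fun F h => F h) g := by
  induction l with
  | nil => rfl
  | cons a l ih => simp [List.foldr, ih]

lemma DL_replicate (m : ℕ) (k : Fin n) (g) : DL (List.replicate m k) g = (pD k)^[m] g := by
  induction m with
  | zero => rfl
  | succ m ih => simp [List.replicate_succ, DL, ih, Function.iterate_succ_apply']

lemma multiD_eq_DL (α : Fin n → ℕ) (g) : multiD α g = DL (rep α) g := by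
  unfold multiD rep
  rw [foldr_comp_apply, List.ofFn_eq_map]
  induction (List.finRange n) with
  | nil => rfl
  | cons a l ih => simp [DL_append, DL_replicate, List.foldr, ih]

lemma contDiff_DL {g : (Fin n → ℝ) → ℝ} (hg : ContDiff ℝ (⊤ : ℕ∞) g) (L : List (Fin n)) :
    ContDiff ℝ (⊤ : ℕ∞) (DL L g) := by
  induction L with
  | nil => exact hg
  | cons a L ih => exact contDiff_pD ih a

lemma vio_DL {g : (Fin n → ℝ) → ℝ} (hg : ContDiff ℝ (⊤ : ℕ∞) g) (hv : VanishesInfOrder g)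
    (L : List (Fin n)) : VanishesInfOrder (DL L g) := by
  induction L with
  | nil => exact hv
  | cons a L ih => exact vio_pD (contDiff_DL hg L) ih a

lemma DL_perm {g : (Fin n → ℝ) → ℝ} (hg : ContDiff ℝ (⊤ : ℕ∞) g) {L L' : List (Fin n)}
    (h : L.Perm L') : DL L g = DL L' g := by
  induction h with
  | nil => rfl
  | cons a h ih => simp [ih]
  | swap a b l => simp [pD_comm (contDiff_DL hg l) b a]
  | trans h₁ h₂ ih₁ ih₂ => rw [ih₁, ih₂]

/-- all ways to distribute the list entries into two lists (by positions) -/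
def splits : List (Fin n) → List (List (Fin n) × List (Fin n))
  | [] => [([], [])]
  | a :: L => ((splits L).map fun p => (a :: p.1, p.2)) ++ ((splits L).map fun p => (p.1, a :: p.2))

lemma splits_count {L : List (Fin n)} {p : List (Fin n) × List (Fin n)}
    (hp : p ∈ splits L) (k : Fin n) : p.1.count k + p.2.count k = L.count k := by
  induction L generalizing p with
  | nil => simp [splits] at hp; simp [hp]
  | cons a L ih =>
    simp only [splits, List.mem_append, List.mem_map] at hp
    rcases hp with ⟨q, hq, rfl⟩ | ⟨q, hq, rfl⟩ <;>
      · simp only [List.count_cons]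
        have := ih hq (p := q)
        omega

lemma diff_list_sum {ι : Type*} (l : List ι) (A : ι → (Fin n → ℝ) → ℝ)
    (hA : ∀ t ∈ l, Differentiable ℝ (A t)) :
    Differentiable ℝ (fun x => (l.map (fun t => A t x)).sum) := by
  induction l with
  | nil => simpa using differentiable_const 0
  | cons a l ih =>
    simp only [List.map_cons, List.sum_cons]
    exact (hA a (by simp)).add (ih (fun t ht => hA t (List.mem_cons_of_mem _ ht)))

lemma pD_list_sum {ι : Type*} (i : Fin n) (l : List ι) (A : ι → (Fin n → ℝ) → ℝ)
    (hA : ∀ t ∈ l, Differentiable ℝ (A t)) :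
    pD i (fun x => (l.map (fun t => A t x)).sum) =
      fun x => (l.map (fun t => pD i (A t) x)).sum := by
  induction l with
  | nil => funext x; simp [pD]
  | cons a l ih =>
    have hl : ∀ t ∈ l, Differentiable ℝ (A t) := fun t ht => hA t (List.mem_cons_of_mem _ ht)
    funext x
    simp only [List.map_cons, List.sum_cons]
    have : pD i (fun x => A a x + (l.map (fun t => A t x)).sum) x
        = pD i (A a) x + pD i (fun x => (l.map (fun t => A t x)).sum) x := by
      unfold pD
      rw [fderiv_fun_add ((hA a (by simp)) x) ((diff_list_sum l A hl) x)]
      simp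
    rw [this, ih hl]

lemma pD_mul (i : Fin n) (g h : (Fin n → ℝ) → ℝ) (hg : Differentiable ℝ g)
    (hh : Differentiable ℝ h) :
    pD i (fun x => g x * h x) = fun x => pD i g x * h x + g x * pD i h x := by
  funext x
  unfold pD
  rw [fderiv_fun_mul (hg x) (hh x)]
  simp
  ring

lemma list_sum_map_add {ι : Type*} (l : List ι) (F G : ι → ℝ) :
    (l.map (fun t => F t + G t)).sum = (l.map F).sum + (l.map G).sum := by
  induction l with
  | nil => simp
  | cons a l ih => simp [ih]; ring

lemma DL_mul {g h : (Fin n → ℝ) → ℝ} (hg : ContDiff ℝ (⊤ : ℕ∞) g) (hh : ContDiff ℝ (⊤ : ℕ∞) h)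
    (L : List (Fin n)) :
    DL L (fun x => g x * h x) =
      fun x => ((splits L).map (fun p => DL p.1 g x * DL p.2 h x)).sum := by
  induction L with
  | nil => funext x; simp [splits]
  | cons a L ih =>
    have hdiff : ∀ p ∈ splits (n := n) L, Differentiable ℝ (fun x => DL p.1 g x * DL p.2 h x) :=
      fun p _ => ((contDiff_DL hg p.1).mul (contDiff_DL hh p.2)).differentiable (by simp)
    funext x
    rw [DL_cons, ih, pD_list_sum a _ _ hdiff]
    have : ∀ p ∈ splits (n := n) L,
        pD a (fun x => DL p.1 g x * DL p.2 h x) x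
          = DL (a :: p.1) g x * DL p.2 h x + DL p.1 g x * DL (a :: p.2) h x := by
      intro p _
      rw [pD_mul a _ _ ((contDiff_DL hg p.1).differentiable (by simp))
        ((contDiff_DL hh p.2).differentiable (by simp))]
      rfl
    simp only []
    rw [List.map_congr_left this, list_sum_map_add]
    simp [splits, List.map_map, Function.comp_def]

lemma DL_sub {g h : (Fin n → ℝ) → ℝ} (hg : ContDiff ℝ (⊤ : ℕ∞) g) (hh : ContDiff ℝ (⊤ : ℕ∞) h)
    (L : List (Fin n)) :
    DL L (fun x => g x - h x) = fun x => DL L g x - DL L h x := by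
  induction L with
  | nil => rfl
  | cons a L ih =>
    funext x
    rw [DL_cons, ih]
    unfold pD
    rw [fderiv_fun_sub (((contDiff_DL hg L).differentiable (by simp)) x)
      (((contDiff_DL hh L).differentiable (by simp)) x)]
    rfl

/-! ### Counting lemmas -/

def cnt (L : List (Fin n)) : Fin n → ℕ := fun k => L.count k

lemma cnt_nil : cnt ([] : List (Fin n)) = fun _ => 0 := by funext k; simp [cnt]

lemma cnt_cons (a : Fin n) (L : List (Fin n)) (k : Fin n) :
    cnt (a :: L) k = cnt L k + (if a = k then 1 else 0) := by
  by_cases h : a = k <;> simp [cnt, List.count_cons, h, eq_comm]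

lemma cnt_cons_eq_iff (a : Fin n) (L : List (Fin n)) (δ : Fin n → ℕ) :
    cnt (a :: L) = δ ↔ (0 < δ a ∧ cnt L = Function.update δ a (δ a - 1)) := by
  constructor
  · intro h
    have ha := congrFun h a
    rw [cnt_cons] at ha
    simp at ha
    constructor
    · omega
    · funext k
      by_cases hk : k = a
      · subst hk; simp [Function.update]; omega
      · have hthis := congrFun h k
        rw [cnt_cons, if_neg (Ne.symm hk), add_zero] at hthis
        simp [Function.update, hk, hthis]
  · rintro ⟨h1, h2⟩
    funext k
    rw [cnt_cons, h2]
    by_cases hk : k = a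
    · subst hk; simp [Function.update]; omega
    · rw [if_neg (Ne.symm hk), add_zero]
      simp [Function.update, hk]

lemma splits_countP (L : List (Fin n)) (δ : Fin n → ℕ) :
    (splits L).countP (fun p => decide (cnt p.1 = δ)) = ∏ k, (cnt L k).choose (δ k) := by
  induction L generalizing δ with
  | nil =>
    by_cases h : δ = fun _ => 0
    · subst h
      simp [splits, List.countP, List.countP.go, cnt_nil]
    · have : ∃ k, δ k ≠ 0 := by
        by_contra hc
        push_neg at hc
        exact h (funext hc)
      obtain ⟨k, hk⟩ := this
      rw [Finset.prod_eq_zero (Finset.mem_univ k)]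
      · rw [List.countP_eq_zero]
        intro p hp
        simp [splits] at hp
        subst hp
        simp [cnt_nil]
        intro hcc
        exact absurd (congrFun hcc k).symm hk
      · show Nat.choose (cnt ([] : List (Fin n)) k) (δ k) = 0
        have hc0 : cnt ([] : List (Fin n)) k = 0 := by simp [cnt]
        rw [hc0]
        exact Nat.choose_eq_zero_of_lt (by omega)
  | cons a L ih =>
    rw [show splits (a :: L) = ((splits L).map fun p => (a :: p.1, p.2))
        ++ ((splits L).map fun p => (p.1, a :: p.2)) from rfl]
    rw [List.countP_append, List.countP_map, List.countP_map]
    have h2 : ((splits L).countP ((fun p => decide (cnt p.1 = δ)) ∘ (fun p => (p.1, a :: p.2))))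
        = ∏ k, (cnt L k).choose (δ k) := by
      rw [← ih δ]; rfl
    by_cases hδ : δ a = 0
    · have h1 : ((splits L).countP ((fun p => decide (cnt p.1 = δ)) ∘ (fun p => (a :: p.1, p.2))))
          = 0 := by
        rw [List.countP_eq_zero]
        intro p hp
        simp only [Function.comp, decide_eq_true_eq]
        intro hcc
        rw [cnt_cons_eq_iff] at hcc
        omega
      rw [h1, h2]
      rw [zero_add]
      apply Finset.prod_congr rfl
      intro k _
      by_cases hk : k = a
      · subst hk
        rw [hδ, Nat.choose_zero_right, Nat.choose_zero_right]
      · congr 1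
        rw [cnt_cons, if_neg (Ne.symm hk), add_zero]
    · set δ' := Function.update δ a (δ a - 1) with hδ'
      have h1 : ((splits L).countP ((fun p => decide (cnt p.1 = δ)) ∘ (fun p => (a :: p.1, p.2))))
          = ∏ k, (cnt L k).choose (δ' k) := by
        rw [← ih δ']
        apply List.countP_congr
        intro p _
        simp only [Function.comp, decide_eq_true_eq]
        rw [cnt_cons_eq_iff]
        constructor
        · rintro ⟨_, h⟩; exact h
        · intro h; exact ⟨Nat.pos_of_ne_zero hδ, h⟩
      rw [h1, h2]
      refine Finset.prod_add_prod_eq (Finset.mem_univ a) ?_ ?_ ?_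
      · show (cnt L a).choose (δ' a) + (cnt L a).choose (δ a) = (cnt (a :: L) a).choose (δ a)
        obtain ⟨e, he⟩ : ∃ e, δ a = e + 1 := ⟨δ a - 1, by omega⟩
        have hda : δ' a = e := by rw [hδ', Function.update_self, he]; rfl
        rw [cnt_cons, if_pos rfl, hda, he]
        exact (Nat.choose_succ_succ _ _).symm
      · intro k _ hk
        have h3 : cnt (a :: L) k = cnt L k := by rw [cnt_cons, if_neg (Ne.symm hk), add_zero]
        rw [h3, hδ']
        simp [Function.update, hk]
      · intro k _ hk
        rw [cnt_cons, if_neg (Ne.symm hk), add_zero]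

lemma choose_lt_left (a' : ℕ) : Nat.choose (2*a'+2) a' < Nat.choose (2*a'+2) (a'+1) := by
  have h := Nat.choose_succ_right_eq (2*a'+2) a'
  have hpos : 0 < Nat.choose (2*a'+2) a' := Nat.choose_pos (by omega)
  have hsub : 2*a'+2 - a' = a' + 2 := by omega
  rw [hsub] at h
  nlinarith [h, hpos]

lemma choose_lt_right (b' : ℕ) : Nat.choose (2*b'+2) (b'+2) < Nat.choose (2*b'+2) (b'+1) := by
  have h := Nat.choose_succ_right_eq (2*b'+2) (b'+1)
  have hpos : 0 < Nat.choose (2*b'+2) (b'+1) := Nat.choose_pos (by omega)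
  have hsub : 2*b'+2 - (b'+1) = b' + 1 := by omega
  rw [hsub] at h
  nlinarith [h, hpos]

lemma list_sum_class {β : Type*} (l : List β) (F : β → ℝ) (Q : β → Bool) (K : ℝ)
    (h1 : ∀ p ∈ l, F p ≠ 0 → Q p = true) (h2 : ∀ p ∈ l, Q p = true → F p = K) :
    (l.map F).sum = (l.countP Q : ℝ) * K := by
  induction l with
  | nil => simp
  | cons a l ih =>
    have ha : ∀ p ∈ l, F p ≠ 0 → Q p = true := fun p hp => h1 p (List.mem_cons_of_mem _ hp)
    have hb : ∀ p ∈ l, Q p = true → F p = K := fun p hp => h2 p (List.mem_cons_of_mem _ hp)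
    rw [List.map_cons, List.sum_cons, ih ha hb, List.countP_cons]
    by_cases hQ : Q a = true
    · rw [h2 a (by simp) hQ, hQ]
      simp
      ring
    · have : F a = 0 := by
        by_contra hF
        exact hQ (h1 a (by simp) hF)
      rw [this]
      simp [hQ]

lemma list_sum_zero {β : Type*} (l : List β) (F : β → ℝ)
    (h : ∀ p ∈ l, F p = 0) : (l.map F).sum = 0 := by
  induction l with
  | nil => simp
  | cons a l ih =>
    rw [List.map_cons, List.sum_cons, h a (by simp),
      ih (fun p hp => h p (List.mem_cons_of_mem _ hp))]
    simp

lemma prod_two_factors (i j : Fin n) (hij : i ≠ j) (f : Fin n → ℕ) :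
    ∏ k, f k = f i * (f j * ∏ k ∈ (Finset.univ.erase i).erase j, f k) := by
  rw [← Finset.mul_prod_erase Finset.univ f (Finset.mem_univ i),
    ← Finset.mul_prod_erase (Finset.univ.erase i) f
      (Finset.mem_erase.2 ⟨Ne.symm hij, Finset.mem_univ j⟩)]

end Aux
/-! ### The abstract combinatorial core -/

section Core

variable {n : ℕ}

def add2 (γ : Fin n → ℕ) (i j : Fin n) : Fin n → ℕ :=
  fun k => γ k + (if i = k then 1 else 0) + (if j = k then 1 else 0)

lemma add2_apply (γ : Fin n → ℕ) (i j k : Fin n) :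
    add2 γ i j k = γ k + (if i = k then 1 else 0) + (if j = k then 1 else 0) := rfl

lemma count_append_pair (L : List (Fin n)) (i j k : Fin n) :
    (L ++ [i, j]).count k = cnt L k + (if i = k then 1 else 0) + (if j = k then 1 else 0) := by
  rw [List.count_append]
  have : ([i, j] : List (Fin n)).count k = (if i = k then 1 else 0) + (if j = k then 1 else 0) := by
    by_cases h1 : i = k <;> by_cases h2 : j = k <;>
      simp [List.count_cons, h1, h2, eq_comm]
  rw [this, cnt]
  ring

variable (c : List (Fin n) → ℝ)
  (hperm : ∀ {L L' : List (Fin n)}, L.Perm L' → c L = c L')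

include hperm in
lemma c_append_pair (L : List (Fin n)) (i j : Fin n) :
    c (L ++ [i, j]) = c (rep (add2 (cnt L) i j)) := by
  apply hperm
  rw [List.perm_iff_count]
  intro k
  rw [count_append_pair, count_rep]
  rfl

set_option maxHeartbeats 1000000 in
include hperm in
/-- The symmetric core lemma. -/
lemma core_sym
    (hrel : ∀ (i j : Fin n) (L : List (Fin n)),
      ((splits L).map (fun p => c (p.1 ++ [i, i]) * c (p.2 ++ [j, j]))).sum
        - ((splits L).map (fun p => c (p.1 ++ [i, j]) * c (p.2 ++ [i, j]))).sum = 0)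
    (i j : Fin n) (hij : i ≠ j) (δ : Fin n → ℕ) (hδi : 1 ≤ δ i) (hδj : 1 ≤ δ j)
    (hforce : ∀ β₁ β₂ : Fin n → ℕ, c (rep β₁) ≠ 0 → c (rep β₂) ≠ 0 →
      (∀ k, β₁ k + β₂ k = 2 * δ k) → β₁ = δ) :
    c (rep δ) = 0 := by
  classical
  have hji : j ≠ i := Ne.symm hij
  -- the base multi-index and list
  set β : Fin n → ℕ :=
    fun k => 2 * δ k - (if i = k then 2 else 0) - (if j = k then 2 else 0) with hβ
  have hβi : β i = 2 * δ i - 2 := by simp only [hβ, eq_self_iff_true, if_true, if_neg hji]; omega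
  have hβj : β j = 2 * δ j - 2 := by simp only [hβ, eq_self_iff_true, if_true, if_neg hij]; omega
  have hβo : ∀ k, i ≠ k → j ≠ k → β k = 2 * δ k := by
    intro k h1 h2; simp only [hβ, if_neg h1, if_neg h2]; omega
  set L : List (Fin n) := rep β with hL
  have hcntL : ∀ k, cnt L k = β k := fun k => count_rep β k
  set K : ℝ := c (rep δ) * c (rep δ) with hK
  -- the two class count functions
  set δ₁ : Fin n → ℕ := fun k => δ k - (if i = k then 2 else 0) with hδ₁
  have hδ₁i : δ₁ i = δ i - 2 := by simp only [hδ₁, eq_self_iff_true, if_true]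
  have hδ₁o : ∀ k, i ≠ k → δ₁ k = δ k := by intro k h1; simp only [hδ₁, if_neg h1]; omega
  set δ₂ : Fin n → ℕ :=
    fun k => δ k - (if i = k then 1 else 0) - (if j = k then 1 else 0) with hδ₂
  have hδ₂i : δ₂ i = δ i - 1 := by simp only [hδ₂, eq_self_iff_true, if_true, if_neg hji]; omega
  have hδ₂j : δ₂ j = δ j - 1 := by simp only [hδ₂, eq_self_iff_true, if_true, if_neg hij]; omega
  have hδ₂o : ∀ k, i ≠ k → j ≠ k → δ₂ k = δ k := by
    intro k h1 h2; simp only [hδ₂, if_neg h1, if_neg h2]; omega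
  have hsumβ : ∀ p ∈ splits (n := n) L, ∀ k, cnt p.1 k + cnt p.2 k = β k := by
    intro p hp k
    rw [← hcntL k]
    exact splits_count hp k
  -- classification for the second sum
  have hclass₂ : ∀ p ∈ splits (n := n) L, c (p.1 ++ [i, j]) * c (p.2 ++ [i, j]) ≠ 0 →
      cnt p.1 = δ₂ ∧ cnt p.2 = δ₂ := by
    intro p hp hne
    have hne1 : c (p.1 ++ [i, j]) ≠ 0 := left_ne_zero_of_mul hne
    have hne2 : c (p.2 ++ [i, j]) ≠ 0 := right_ne_zero_of_mul hne
    rw [c_append_pair c hperm] at hne1 hne2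
    have hsum : ∀ k, add2 (cnt p.1) i j k + add2 (cnt p.2) i j k = 2 * δ k := by
      intro k
      have h := hsumβ p hp k
      rcases eq_or_ne i k with rfl | h1
      · rw [hβi] at h
        simp only [add2_apply, eq_self_iff_true, if_true, if_neg hji]
        omega
      · rcases eq_or_ne j k with rfl | h2
        · rw [hβj] at h
          simp only [add2_apply, eq_self_iff_true, if_true, if_neg h1]
          omega
        · rw [hβo k h1 h2] at h
          simp only [add2_apply, if_neg h1, if_neg h2]
          omega
    have hforced1 := hforce _ _ hne1 hne2 hsum
    have hforced2 := hforce _ _ hne2 hne1 (fun k => by rw [← hsum k]; ring)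
    constructor
    · funext k
      have h := congrFun hforced1 k
      rcases eq_or_ne i k with rfl | h1
      · rw [hδ₂i]
        simp only [add2_apply, eq_self_iff_true, if_true, if_neg hji] at h
        omega
      · rcases eq_or_ne j k with rfl | h2
        · rw [hδ₂j]
          simp only [add2_apply, eq_self_iff_true, if_true, if_neg h1] at h
          omega
        · rw [hδ₂o k h1 h2]
          simp only [add2_apply, if_neg h1, if_neg h2] at h
          omega
    · funext k
      have h := congrFun hforced2 k
      rcases eq_or_ne i k with rfl | h1
      · rw [hδ₂i]
        simp only [add2_apply, eq_self_iff_true, if_true, if_neg hji] at h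
        omega
      · rcases eq_or_ne j k with rfl | h2
        · rw [hδ₂j]
          simp only [add2_apply, eq_self_iff_true, if_true, if_neg h1] at h
          omega
        · rw [hδ₂o k h1 h2]
          simp only [add2_apply, if_neg h1, if_neg h2] at h
          omega
  -- value on the second class
  have hval₂ : ∀ p ∈ splits (n := n) L, (decide (cnt p.1 = δ₂)) = true →
      c (p.1 ++ [i, j]) * c (p.2 ++ [i, j]) = K := by
    intro p hp hq
    have hcnt1 : cnt p.1 = δ₂ := of_decide_eq_true hq
    have hcnt2 : cnt p.2 = δ₂ := by
      funext k
      have h := hsumβ p hp k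
      have h1 := congrFun hcnt1 k
      rcases eq_or_ne i k with rfl | hi
      · rw [hδ₂i] at h1 ⊢; rw [hβi] at h; omega
      · rcases eq_or_ne j k with rfl | hj
        · rw [hδ₂j] at h1 ⊢; rw [hβj] at h; omega
        · rw [hδ₂o k hi hj] at h1 ⊢; rw [hβo k hi hj] at h; omega
    have hadd : add2 δ₂ i j = δ := by
      funext k
      rcases eq_or_ne i k with rfl | hi
      · simp only [add2_apply, eq_self_iff_true, if_true, if_neg hji, hδ₂i]; omega
      · rcases eq_or_ne j k with rfl | hj
        · simp only [add2_apply, eq_self_iff_true, if_true, if_neg hi, hδ₂j]; omega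
        · simp only [add2_apply, if_neg hi, if_neg hj, hδ₂o k hi hj]; omega
    rw [c_append_pair c hperm, c_append_pair c hperm, hcnt1, hcnt2, hadd]
  have hs2 : ((splits L).map (fun p => c (p.1 ++ [i, j]) * c (p.2 ++ [i, j]))).sum
      = ((∏ k, (β k).choose (δ₂ k) : ℕ) : ℝ) * K := by
    rw [list_sum_class _ _ (fun p => decide (cnt p.1 = δ₂)) K
      (fun p hp hne => decide_eq_true ((hclass₂ p hp hne).1)) hval₂]
    rw [splits_countP L δ₂]
    norm_num
    left
    exact Finset.prod_congr rfl (fun k _ => by rw [show cnt L k = β k from hcntL k])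
  have hrel' := hrel i j L
  by_cases hcase : 2 ≤ δ i ∧ 2 ≤ δ j
  · obtain ⟨hi2, hj2⟩ := hcase
    set δ₁' : Fin n → ℕ := fun k => δ k - (if j = k then 2 else 0) with hδ₁'
    have hδ₁'j : δ₁' j = δ j - 2 := by simp only [hδ₁', eq_self_iff_true, if_true]
    have hδ₁'o : ∀ k, j ≠ k → δ₁' k = δ k := by intro k h1; simp only [hδ₁', if_neg h1]; omega
    have hclass₁ : ∀ p ∈ splits (n := n) L, c (p.1 ++ [i, i]) * c (p.2 ++ [j, j]) ≠ 0 →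
        cnt p.1 = δ₁ ∧ cnt p.2 = δ₁' := by
      intro p hp hne
      have hne1 : c (p.1 ++ [i, i]) ≠ 0 := left_ne_zero_of_mul hne
      have hne2 : c (p.2 ++ [j, j]) ≠ 0 := right_ne_zero_of_mul hne
      rw [c_append_pair c hperm] at hne1 hne2
      have hsum : ∀ k, add2 (cnt p.1) i i k + add2 (cnt p.2) j j k = 2 * δ k := by
        intro k
        have h := hsumβ p hp k
        rcases eq_or_ne i k with rfl | h1
        · rw [hβi] at h
          simp only [add2_apply, eq_self_iff_true, if_true, if_neg hji]
          omega
        · rcases eq_or_ne j k with rfl | h2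
          · rw [hβj] at h
            simp only [add2_apply, eq_self_iff_true, if_true, if_neg h1]
            omega
          · rw [hβo k h1 h2] at h
            simp only [add2_apply, if_neg h1, if_neg h2]
            omega
      have hforced1 := hforce _ _ hne1 hne2 hsum
      have hforced2 := hforce _ _ hne2 hne1 (fun k => by rw [← hsum k]; ring)
      constructor
      · funext k
        have h := congrFun hforced1 k
        rcases eq_or_ne i k with rfl | h1
        · rw [hδ₁i]
          simp only [add2_apply, eq_self_iff_true, if_true] at h
          omega
        · rw [hδ₁o k h1]
          simp only [add2_apply, if_neg h1] at h
          omega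
      · funext k
        have h := congrFun hforced2 k
        rcases eq_or_ne j k with rfl | h2
        · rw [hδ₁'j]
          simp only [add2_apply, eq_self_iff_true, if_true] at h
          omega
        · rw [hδ₁'o k h2]
          simp only [add2_apply, if_neg h2] at h
          omega
    have hval₁ : ∀ p ∈ splits (n := n) L, (decide (cnt p.1 = δ₁)) = true →
        c (p.1 ++ [i, i]) * c (p.2 ++ [j, j]) = K := by
      intro p hp hq
      have hcnt1 : cnt p.1 = δ₁ := of_decide_eq_true hq
      have hcnt2 : cnt p.2 = δ₁' := by
        funext k
        have h := hsumβ p hp k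
        have h1 := congrFun hcnt1 k
        rcases eq_or_ne i k with rfl | hi
        · rw [hδ₁i] at h1; rw [hβi] at h; rw [hδ₁'o i hji]; omega
        · rcases eq_or_ne j k with rfl | hj
          · rw [hδ₁o j hi] at h1; rw [hβj] at h; rw [hδ₁'j]; omega
          · rw [hδ₁o k hi] at h1; rw [hβo k hi hj] at h; rw [hδ₁'o k hj]; omega
      have hadd1 : add2 δ₁ i i = δ := by
        funext k
        rcases eq_or_ne i k with rfl | hi
        · simp only [add2_apply, eq_self_iff_true, if_true, hδ₁i]; omega
        · simp only [add2_apply, if_neg hi, hδ₁o k hi]; omega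
      have hadd2 : add2 δ₁' j j = δ := by
        funext k
        rcases eq_or_ne j k with rfl | hj
        · simp only [add2_apply, eq_self_iff_true, if_true, hδ₁'j]; omega
        · simp only [add2_apply, if_neg hj, hδ₁'o k hj]; omega
      rw [c_append_pair c hperm, c_append_pair c hperm, hcnt1, hcnt2, hadd1, hadd2]
    have hs1 : ((splits L).map (fun p => c (p.1 ++ [i, i]) * c (p.2 ++ [j, j]))).sum
        = ((∏ k, (β k).choose (δ₁ k) : ℕ) : ℝ) * K := by
      rw [list_sum_class _ _ (fun p => decide (cnt p.1 = δ₁)) K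
        (fun p hp hne => decide_eq_true ((hclass₁ p hp hne).1)) hval₁]
      rw [splits_countP L δ₁]
      norm_num
      left
      exact Finset.prod_congr rfl (fun k _ => by rw [show cnt L k = β k from hcntL k])
    rw [hs1, hs2] at hrel'
    -- compare the two counts
    obtain ⟨a', ha'⟩ : ∃ a', δ i = a' + 2 := ⟨δ i - 2, by omega⟩
    obtain ⟨b', hb'⟩ : ∃ b', δ j = b' + 2 := ⟨δ j - 2, by omega⟩
    have hNlt : (∏ k, (β k).choose (δ₁ k)) < (∏ k, (β k).choose (δ₂ k)) := by
      rw [prod_two_factors i j hij (fun k => (β k).choose (δ₁ k)),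
        prod_two_factors i j hij (fun k => (β k).choose (δ₂ k))]
      have htail : ∏ k ∈ (Finset.univ.erase i).erase j, (β k).choose (δ₁ k)
          = ∏ k ∈ (Finset.univ.erase i).erase j, (β k).choose (δ₂ k) := by
        apply Finset.prod_congr rfl
        intro k hk
        have hkj : k ≠ j := (Finset.mem_erase.1 hk).1
        have hki : k ≠ i := (Finset.mem_erase.1 (Finset.mem_erase.1 hk).2).1
        rw [hδ₁o k (Ne.symm hki), hδ₂o k (Ne.symm hki) (Ne.symm hkj)]
      rw [htail]
      have e1 : β i = 2 * a' + 2 := by rw [hβi]; omega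
      have e2 : β j = 2 * b' + 2 := by rw [hβj]; omega
      have e3 : δ₁ i = a' := by rw [hδ₁i]; omega
      have e4 : δ₁ j = b' + 2 := by rw [hδ₁o j hij]; omega
      have e5 : δ₂ i = a' + 1 := by rw [hδ₂i]; omega
      have e6 : δ₂ j = b' + 1 := by rw [hδ₂j]; omega
      rw [e1, e2, e3, e4, e5, e6]
      have hP : 0 < ∏ k ∈ (Finset.univ.erase i).erase j, (β k).choose (δ₂ k) :=
        Finset.prod_pos (fun k hk => by
          have hkj : k ≠ j := (Finset.mem_erase.1 hk).1
          have hki : k ≠ i := (Finset.mem_erase.1 (Finset.mem_erase.1 hk).2).1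
          apply Nat.choose_pos
          rw [hδ₂o k (Ne.symm hki) (Ne.symm hkj), hβo k (Ne.symm hki) (Ne.symm hkj)]
          omega)
      set P : ℕ := ∏ k ∈ (Finset.univ.erase i).erase j, (β k).choose (δ₂ k) with hPdef
      have hx : 0 < Nat.choose (2*a'+2) a' := Nat.choose_pos (by omega)
      have hY : 0 < Nat.choose (2*b'+2) (b'+1) * P :=
        Nat.mul_pos (Nat.choose_pos (by omega)) hP
      have s1 : Nat.choose (2*b'+2) (b'+2) * P < Nat.choose (2*b'+2) (b'+1) * P :=
        (Nat.mul_lt_mul_right hP).2 (choose_lt_right b')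
      have s2 : Nat.choose (2*a'+2) a' * (Nat.choose (2*b'+2) (b'+2) * P)
          < Nat.choose (2*a'+2) a' * (Nat.choose (2*b'+2) (b'+1) * P) :=
        (Nat.mul_lt_mul_left hx).2 s1
      have s3 : Nat.choose (2*a'+2) a' * (Nat.choose (2*b'+2) (b'+1) * P)
          < Nat.choose (2*a'+2) (a'+1) * (Nat.choose (2*b'+2) (b'+1) * P) :=
        (Nat.mul_lt_mul_right hY).2 (choose_lt_left a')
      exact lt_trans s2 s3
    -- conclude
    have hKzero : ((∏ k, (β k).choose (δ₁ k) : ℕ) : ℝ) * K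
        - ((∏ k, (β k).choose (δ₂ k) : ℕ) : ℝ) * K = 0 := hrel'
    have : (((∏ k, (β k).choose (δ₁ k) : ℕ) : ℝ)
        - ((∏ k, (β k).choose (δ₂ k) : ℕ) : ℝ)) * K = 0 := by
      rw [sub_mul]; exact hKzero
    rcases mul_eq_zero.1 this with h' | h'
    · exfalso
      have := sub_eq_zero.1 h'
      have hnat : (∏ k, (β k).choose (δ₁ k)) = (∏ k, (β k).choose (δ₂ k)) :=
        Nat.cast_injective this
      omega
    · exact mul_self_eq_zero.1 h'
  · -- degenerate case : first sum has no nonzero terms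
    have hzero1 : ∀ p ∈ splits (n := n) L, c (p.1 ++ [i, i]) * c (p.2 ++ [j, j]) = 0 := by
      intro p hp
      by_contra hne
      have hne1 : c (p.1 ++ [i, i]) ≠ 0 := left_ne_zero_of_mul hne
      have hne2 : c (p.2 ++ [j, j]) ≠ 0 := right_ne_zero_of_mul hne
      rw [c_append_pair c hperm] at hne1 hne2
      have hsum : ∀ k, add2 (cnt p.1) i i k + add2 (cnt p.2) j j k = 2 * δ k := by
        intro k
        have h := hsumβ p hp k
        rcases eq_or_ne i k with rfl | h1
        · rw [hβi] at h
          simp only [add2_apply, eq_self_iff_true, if_true, if_neg hji]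
          omega
        · rcases eq_or_ne j k with rfl | h2
          · rw [hβj] at h
            simp only [add2_apply, eq_self_iff_true, if_true, if_neg h1]
            omega
          · rw [hβo k h1 h2] at h
            simp only [add2_apply, if_neg h1, if_neg h2]
            omega
      have hforced1 := hforce _ _ hne1 hne2 hsum
      have hforced2 := hforce _ _ hne2 hne1 (fun k => by rw [← hsum k]; ring)
      have hi2 : 2 ≤ δ i := by
        have h := congrFun hforced1 i
        simp only [add2_apply, eq_self_iff_true, if_true] at h
        omega
      have hj2 : 2 ≤ δ j := by
        have h := congrFun hforced2 j
        simp only [add2_apply, eq_self_iff_true, if_true] at h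
        omega
      exact hcase ⟨hi2, hj2⟩
    rw [list_sum_zero _ _ hzero1, hs2, zero_sub, neg_eq_zero] at hrel'
    have hN2pos : 0 < ∏ k, (β k).choose (δ₂ k) :=
      Finset.prod_pos (fun k _ => by
        apply Nat.choose_pos
        rcases eq_or_ne i k with rfl | hi
        · rw [hδ₂i, hβi]; omega
        · rcases eq_or_ne j k with rfl | hj
          · rw [hδ₂j, hβj]; omega
          · rw [hδ₂o k hi hj, hβo k hi hj]; omega)
    rcases mul_eq_zero.1 hrel' with h' | h'
    · exfalso
      have : (∏ k, (β k).choose (δ₂ k)) = 0 := by exact_mod_cast h'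
      omega
    · exact mul_self_eq_zero.1 h'

end Core

section ACore

variable {n : ℕ} (c : List (Fin n) → ℝ)
  (hperm : ∀ {L L' : List (Fin n)}, L.Perm L' → c L = c L')

set_option maxHeartbeats 1000000 in
include hperm in
/-- The asymmetric core lemma. -/
lemma core_asym
    (hrel : ∀ (i j : Fin n) (L : List (Fin n)),
      ((splits L).map (fun p => c (p.1 ++ [i, i]) * c (p.2 ++ [j, j]))).sum
        - ((splits L).map (fun p => c (p.1 ++ [i, j]) * c (p.2 ++ [i, j]))).sum = 0)
    (i j : Fin n) (hij : i ≠ j) (A B : Fin n → ℕ) (hAi : 2 ≤ A i) (hBj : 2 ≤ B j)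
    (hforce1 : ∀ β₁ β₂ : Fin n → ℕ, c (rep β₁) ≠ 0 → c (rep β₂) ≠ 0 →
        (∀ k, β₁ k + β₂ k = A k + B k) → 2 ≤ β₁ i → 2 ≤ β₂ j → β₁ = A ∧ β₂ = B)
    (hforce2 : ∀ β₁ β₂ : Fin n → ℕ, c (rep β₁) ≠ 0 → c (rep β₂) ≠ 0 →
        (∀ k, β₁ k + β₂ k = A k + B k) → 1 ≤ β₁ i → 1 ≤ β₁ j → 1 ≤ β₂ i → 1 ≤ β₂ j → False) :
    c (rep A) * c (rep B) = 0 := by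
  classical
  have hji : j ≠ i := Ne.symm hij
  set β : Fin n → ℕ :=
    fun k => A k + B k - (if i = k then 2 else 0) - (if j = k then 2 else 0) with hβ
  have hβi : β i = A i + B i - 2 := by
    simp only [hβ, eq_self_iff_true, if_true, if_neg hji]; omega
  have hβj : β j = A j + B j - 2 := by
    simp only [hβ, eq_self_iff_true, if_true, if_neg hij]; omega
  have hβo : ∀ k, i ≠ k → j ≠ k → β k = A k + B k := by
    intro k h1 h2; simp only [hβ, if_neg h1, if_neg h2]; omega
  set L : List (Fin n) := rep β with hL
  have hcntL : ∀ k, cnt L k = β k := fun k => count_rep β k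
  have hsumβ : ∀ p ∈ splits (n := n) L, ∀ k, cnt p.1 k + cnt p.2 k = β k := by
    intro p hp k
    rw [← hcntL k]
    exact splits_count hp k
  set K : ℝ := c (rep A) * c (rep B) with hK
  set A₁ : Fin n → ℕ := fun k => A k - (if i = k then 2 else 0) with hA₁
  have hA₁i : A₁ i = A i - 2 := by simp only [hA₁, eq_self_iff_true, if_true]
  have hA₁o : ∀ k, i ≠ k → A₁ k = A k := by intro k h1; simp only [hA₁, if_neg h1]; omega
  set B₂ : Fin n → ℕ := fun k => B k - (if j = k then 2 else 0) with hB₂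
  have hB₂j : B₂ j = B j - 2 := by simp only [hB₂, eq_self_iff_true, if_true]
  have hB₂o : ∀ k, j ≠ k → B₂ k = B k := by intro k h1; simp only [hB₂, if_neg h1]; omega
  -- second sum entirely zero
  have hzero2 : ∀ p ∈ splits (n := n) L, c (p.1 ++ [i, j]) * c (p.2 ++ [i, j]) = 0 := by
    intro p hp
    by_contra hne
    have hne1 : c (p.1 ++ [i, j]) ≠ 0 := left_ne_zero_of_mul hne
    have hne2 : c (p.2 ++ [i, j]) ≠ 0 := right_ne_zero_of_mul hne
    rw [c_append_pair c hperm] at hne1 hne2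
    have hsum : ∀ k, add2 (cnt p.1) i j k + add2 (cnt p.2) i j k = A k + B k := by
      intro k
      have h := hsumβ p hp k
      rcases eq_or_ne i k with rfl | h1
      · rw [hβi] at h
        simp only [add2_apply, eq_self_iff_true, if_true, if_neg hji]
        omega
      · rcases eq_or_ne j k with rfl | h2
        · rw [hβj] at h
          simp only [add2_apply, eq_self_iff_true, if_true, if_neg h1]
          omega
        · rw [hβo k h1 h2] at h
          simp only [add2_apply, if_neg h1, if_neg h2]
          omega
    refine hforce2 _ _ hne1 hne2 hsum ?_ ?_ ?_ ?_ <;>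
      · simp only [add2_apply, eq_self_iff_true, if_true]
        omega
  -- first sum classification
  have hclass₁ : ∀ p ∈ splits (n := n) L, c (p.1 ++ [i, i]) * c (p.2 ++ [j, j]) ≠ 0 →
      cnt p.1 = A₁ := by
    intro p hp hne
    have hne1 : c (p.1 ++ [i, i]) ≠ 0 := left_ne_zero_of_mul hne
    have hne2 : c (p.2 ++ [j, j]) ≠ 0 := right_ne_zero_of_mul hne
    rw [c_append_pair c hperm] at hne1 hne2
    have hsum : ∀ k, add2 (cnt p.1) i i k + add2 (cnt p.2) j j k = A k + B k := by
      intro k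
      have h := hsumβ p hp k
      rcases eq_or_ne i k with rfl | h1
      · rw [hβi] at h
        simp only [add2_apply, eq_self_iff_true, if_true, if_neg hji]
        omega
      · rcases eq_or_ne j k with rfl | h2
        · rw [hβj] at h
          simp only [add2_apply, eq_self_iff_true, if_true, if_neg h1]
          omega
        · rw [hβo k h1 h2] at h
          simp only [add2_apply, if_neg h1, if_neg h2]
          omega
    have h2i : 2 ≤ add2 (cnt p.1) i i i := by
      simp only [add2_apply, eq_self_iff_true, if_true]; omega
    have h2j : 2 ≤ add2 (cnt p.2) j j j := by
      simp only [add2_apply, eq_self_iff_true, if_true]; omega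
    obtain ⟨hEA, -⟩ := hforce1 _ _ hne1 hne2 hsum h2i h2j
    funext k
    have h := congrFun hEA k
    rcases eq_or_ne i k with rfl | h1
    · rw [hA₁i]
      simp only [add2_apply, eq_self_iff_true, if_true] at h
      omega
    · rw [hA₁o k h1]
      simp only [add2_apply, if_neg h1] at h
      omega
  have hval₁ : ∀ p ∈ splits (n := n) L, (decide (cnt p.1 = A₁)) = true →
      c (p.1 ++ [i, i]) * c (p.2 ++ [j, j]) = K := by
    intro p hp hq
    have hcnt1 : cnt p.1 = A₁ := of_decide_eq_true hq
    have hcnt2 : cnt p.2 = B₂ := by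
      funext k
      have h := hsumβ p hp k
      have h1 := congrFun hcnt1 k
      rcases eq_or_ne i k with rfl | hi
      · rw [hA₁i] at h1; rw [hβi] at h; rw [hB₂o i hji]; omega
      · rcases eq_or_ne j k with rfl | hj
        · rw [hA₁o j hi] at h1; rw [hβj] at h; rw [hB₂j]; omega
        · rw [hA₁o k hi] at h1; rw [hβo k hi hj] at h; rw [hB₂o k hj]; omega
    have hadd1 : add2 A₁ i i = A := by
      funext k
      rcases eq_or_ne i k with rfl | hi
      · simp only [add2_apply, eq_self_iff_true, if_true, hA₁i]; omega
      · simp only [add2_apply, if_neg hi, hA₁o k hi]; omega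
    have hadd2 : add2 B₂ j j = B := by
      funext k
      rcases eq_or_ne j k with rfl | hj
      · simp only [add2_apply, eq_self_iff_true, if_true, hB₂j]; omega
      · simp only [add2_apply, if_neg hj, hB₂o k hj]; omega
    rw [c_append_pair c hperm, c_append_pair c hperm, hcnt1, hcnt2, hadd1, hadd2]
  have hs1 : ((splits L).map (fun p => c (p.1 ++ [i, i]) * c (p.2 ++ [j, j]))).sum
      = ((∏ k, (β k).choose (A₁ k) : ℕ) : ℝ) * K := by
    rw [list_sum_class _ _ (fun p => decide (cnt p.1 = A₁)) K
      (fun p hp hne => decide_eq_true (hclass₁ p hp hne)) hval₁]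
    rw [splits_countP L A₁]
    norm_num
    left
    exact Finset.prod_congr rfl (fun k _ => by rw [show cnt L k = β k from hcntL k])
  have hrel' := hrel i j L
  rw [hs1, list_sum_zero _ _ hzero2, sub_zero] at hrel'
  have hNpos : 0 < ∏ k, (β k).choose (A₁ k) :=
    Finset.prod_pos (fun k _ => by
      apply Nat.choose_pos
      rcases eq_or_ne i k with rfl | hi
      · rw [hA₁i, hβi]; omega
      · rcases eq_or_ne j k with rfl | hj
        · rw [hA₁o j hi, hβj]; omega
        · rw [hA₁o k hi, hβo k hi hj]; omega)
  rcases mul_eq_zero.1 hrel' with h' | h'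
  · exfalso
    have : (∏ k, (β k).choose (A₁ k)) = 0 := by exact_mod_cast h'
    omega
  · exact h'

end ACore

/-! ### Geometry of the Newton polyhedron -/

section Geo

variable {n : ℕ}

/-- `ℕ`-valued single function -/
def psn (i : Fin n) (m : ℕ) : Fin n → ℕ := fun k => if i = k then m else 0

lemma psn_cast (i : Fin n) (m : ℕ) :
    (fun k => ((psn i m k : ℕ) : ℝ)) = Pi.single i (m : ℝ) := by
  funext k
  by_cases h : i = k
  · subst h; simp [psn]
  · rw [Pi.single_apply, if_neg (fun hh => h hh.symm)]
    simp [psn, h]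

lemma mem_openSegment_mid {x₁ x₂ v : Fin n → ℝ} (h : ∀ k, x₁ k + x₂ k = 2 * v k) :
    v ∈ openSegment ℝ x₁ x₂ := by
  refine ⟨1/2, 1/2, by norm_num, by norm_num, by norm_num, ?_⟩
  funext k
  have := h k
  simp only [Pi.add_apply, Pi.smul_apply, smul_eq_mul]
  linarith

variable (f : (Fin n → ℝ) → ℝ)

lemma tCoeff_iff (α : Fin n → ℕ) : tCoeff f α ≠ 0 ↔ DL (rep α) f 0 ≠ 0 := by
  have hM : ((∏ i, Nat.factorial (α i) : ℕ) : ℝ) ≠ 0 := by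
    rw [Nat.cast_ne_zero]
    have := Finset.prod_pos (fun k (_ : k ∈ Finset.univ) => Nat.factorial_pos (α k))
    omega
  unfold tCoeff
  rw [multiD_eq_DL]
  constructor
  · intro h hc
    exact h (by rw [hc, zero_div])
  · intro h
    exact div_ne_zero h hM

lemma vertex_corner {v : Fin n → ℝ} (hv : v ∈ vertices f) :
    ∃ α : Fin n → ℕ, (∀ k, v k = α k) ∧ tCoeff f α ≠ 0 := by
  have hvS : v ∈ {x : Fin n → ℝ | ∃ α : Fin n → ℕ, tCoeff f α ≠ 0 ∧ ∀ i, (α i : ℝ) ≤ x i} :=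
    extremePoints_convexHull_subset hv
  obtain ⟨α, hα, hle⟩ := hvS
  refine ⟨α, fun k => ?_, hα⟩
  by_contra hk
  have hlt : (α k : ℝ) < v k := lt_of_le_of_ne (hle k) (fun h => hk h.symm)
  set x₁ : Fin n → ℝ := fun m => if m = k then (α k : ℝ) else v m with hx₁
  set x₂ : Fin n → ℝ := fun m => if m = k then 2 * v k - α k else v m with hx₂
  have hx₁S : x₁ ∈ newtonPoly f := by
    apply subset_convexHull
    refine ⟨α, hα, fun m => ?_⟩
    by_cases hm : m = k
    · subst hm; simp [hx₁]
    · simpa [hx₁, hm] using hle m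
  have hx₂S : x₂ ∈ newtonPoly f := by
    apply subset_convexHull
    refine ⟨α, hα, fun m => ?_⟩
    by_cases hm : m = k
    · subst hm; simp [hx₂]; linarith
    · simpa [hx₂, hm] using hle m
  have hseg : v ∈ openSegment ℝ x₁ x₂ := by
    apply mem_openSegment_mid
    intro m
    by_cases hm : m = k
    · subst hm
      simp only [hx₁, hx₂, eq_self_iff_true, if_true]
      ring
    · simp only [hx₁, hx₂, if_neg hm]
      ring
  have := (hv.2 hx₁S hx₂S hseg)
  have := congrFun this k
  simp [hx₁] at this
  exact hk (by linarith [this])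

lemma vertex_force {v : Fin n → ℝ} (hv : v ∈ vertices f) (α : Fin n → ℕ)
    (hvα : ∀ k, v k = α k) :
    ∀ β₁ β₂ : Fin n → ℕ, DL (rep β₁) f 0 ≠ 0 → DL (rep β₂) f 0 ≠ 0 →
      (∀ k, β₁ k + β₂ k = 2 * α k) → β₁ = α := by
  intro β₁ β₂ h1 h2 hsum
  set x₁ : Fin n → ℝ := fun k => (β₁ k : ℝ) with hx₁
  set x₂ : Fin n → ℝ := fun k => (β₂ k : ℝ) with hx₂
  have hx₁S : x₁ ∈ newtonPoly f :=
    subset_convexHull _ _ ⟨β₁, (tCoeff_iff f β₁).2 h1, fun m => le_refl _⟩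
  have hx₂S : x₂ ∈ newtonPoly f :=
    subset_convexHull _ _ ⟨β₂, (tCoeff_iff f β₂).2 h2, fun m => le_refl _⟩
  have hseg : v ∈ openSegment ℝ x₁ x₂ := by
    apply mem_openSegment_mid
    intro k
    have := hsum k
    rw [hvα k]
    simp only [hx₁, hx₂]
    exact_mod_cast congrArg (Nat.cast : ℕ → ℝ) this
  have hx₁v := (hv.2 hx₁S hx₂S hseg)
  funext k
  have h := congrFun hx₁v k
  rw [hvα k] at h
  simp only [hx₁] at h
  exact_mod_cast h

lemma vertex_axis_min {v : Fin n → ℝ} (hv : v ∈ vertices f) (i : Fin n) (m : ℕ)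
    (hvm : ∀ k, v k = ((psn i m k : ℕ) : ℝ)) :
    ∀ a, a < m → tCoeff f (psn i a) = 0 := by
  intro a ha
  by_contra hne
  set x₁ : Fin n → ℝ := fun k => ((psn i a k : ℕ) : ℝ) with hx₁
  set x₂ : Fin n → ℝ := fun k => if i = k then (2 * m - a : ℝ) else 0 with hx₂
  have hx₁S : x₁ ∈ newtonPoly f :=
    subset_convexHull _ _ ⟨psn i a, hne, fun m => le_refl _⟩
  have hx₂S : x₂ ∈ newtonPoly f := by
    apply subset_convexHull
    refine ⟨psn i a, hne, fun k => ?_⟩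
    by_cases hk : i = k
    · subst hk
      simp [hx₂, psn]
      push_cast
      have : (a : ℝ) < m := by exact_mod_cast ha
      linarith
    · simp [hx₂, psn, hk]
  have hseg : v ∈ openSegment ℝ x₁ x₂ := by
    apply mem_openSegment_mid
    intro k
    rw [hvm k]
    by_cases hk : i = k
    · subst hk
      simp only [hx₁, hx₂, psn, eq_self_iff_true, if_true]
      push_cast
      ring
    · simp only [hx₁, hx₂, psn, if_neg hk]
      norm_num
  have hx₁v := (hv.2 hx₁S hx₂S hseg)
  have := congrFun hx₁v i
  rw [hvm i] at this
  simp [hx₁, psn] at this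
  omega

end Geo

/-! ### The coefficient relations coming from the degenerate Hessian -/

section Rel

variable {n : ℕ} {f : (Fin n → ℝ) → ℝ}

lemma main_rel (hf : ContDiff ℝ (⊤ : ℕ∞) f)
    (hH : ∀ u v : Fin n → ℝ, VanishesInfOrder (hessDet2 f u v)) :
    ∀ (i j : Fin n) (L : List (Fin n)),
      ((splits L).map (fun p => DL (p.1 ++ [i, i]) f 0 * DL (p.2 ++ [j, j]) f 0)).sum
        - ((splits L).map (fun p => DL (p.1 ++ [i, j]) f 0 * DL (p.2 ++ [i, j]) f 0)).sum = 0 := by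
  intro i j L
  have hA : ContDiff ℝ (⊤ : ℕ∞) (DL [i, i] f) := contDiff_DL hf _
  have hB : ContDiff ℝ (⊤ : ℕ∞) (DL [j, j] f) := contDiff_DL hf _
  have hC : ContDiff ℝ (⊤ : ℕ∞) (DL [i, j] f) := contDiff_DL hf _
  have hhess : hessDet2 f (Pi.single i 1) (Pi.single j 1)
      = fun x => (fun y => DL [i, i] f y * DL [j, j] f y) x
          - (fun y => DL [i, j] f y * DL [i, j] f y) x := by
    funext x
    show dirD (Pi.single i 1) (dirD (Pi.single i 1) f) x
          * dirD (Pi.single j 1) (dirD (Pi.single j 1) f) x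
        - (dirD (Pi.single i 1) (dirD (Pi.single j 1) f) x) ^ 2 = _
    rw [pow_two]
    rfl
  have hsm : ContDiff ℝ (⊤ : ℕ∞) (fun x => (fun y => DL [i, i] f y * DL [j, j] f y) x
      - (fun y => DL [i, j] f y * DL [i, j] f y) x) := (hA.mul hB).sub (hC.mul hC)
  have hv : VanishesInfOrder (fun x => (fun y => DL [i, i] f y * DL [j, j] f y) x
      - (fun y => DL [i, j] f y * DL [i, j] f y) x) := by
    rw [← hhess]
    exact hH _ _
  have h0 : DL L (fun x => (fun y => DL [i, i] f y * DL [j, j] f y) x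
      - (fun y => DL [i, j] f y * DL [i, j] f y) x) 0 = 0 :=
    vio_zero (vio_DL hsm hv L)
  rw [DL_sub (hA.mul hB) (hC.mul hC) L] at h0
  have e1 : DL L (fun y => DL [i, i] f y * DL [j, j] f y) 0
      = ((splits L).map (fun p => DL (p.1 ++ [i, i]) f 0 * DL (p.2 ++ [j, j]) f 0)).sum := by
    rw [DL_mul hA hB L]
    simp only []
    congr 1
    apply List.map_congr_left
    intro p _
    rw [DL_append, DL_append]
  have e2 : DL L (fun y => DL [i, j] f y * DL [i, j] f y) 0
      = ((splits L).map (fun p => DL (p.1 ++ [i, j]) f 0 * DL (p.2 ++ [i, j]) f 0)).sum := by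
    rw [DL_mul hC hC L]
    simp only []
    congr 1
    apply List.map_congr_left
    intro p _
    rw [DL_append, DL_append]
  rw [← e1, ← e2]
  exact h0

end Rel

/-! ### Part 1 : every vertex lies on a coordinate axis -/

section Part1

variable {n : ℕ} {f : (Fin n → ℝ) → ℝ}

lemma rep_perm_nil : (rep (fun _ : Fin n => 0)).Perm [] := by
  rw [List.perm_iff_count]
  intro k
  rw [count_rep]
  simp

lemma rep_perm_single (i : Fin n) : (rep (psn i 1)).Perm [i] := by
  rw [List.perm_iff_count]
  intro k
  rw [count_rep]
  rcases eq_or_ne i k with rfl | h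
  · simp [psn]
  · have h2 : ¬ k = i := fun hh => h hh.symm
    simp [psn, if_neg h, List.count_cons, h2]

lemma vertex_single (hf : ContDiff ℝ (⊤ : ℕ∞) f) (h0 : f 0 = 0) (h1 : fderiv ℝ f 0 = 0)
    (hH : ∀ u v : Fin n → ℝ, VanishesInfOrder (hessDet2 f u v))
    {v : Fin n → ℝ} (hv : v ∈ vertices f) :
    ∃ (i : Fin n) (m : ℕ), 2 ≤ m ∧ (∀ k, v k = ((psn i m k : ℕ) : ℝ))
      ∧ DL (rep (psn i m)) f 0 ≠ 0 := by
  obtain ⟨α, hvα, hα⟩ := vertex_corner f hv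
  have hc : DL (rep α) f 0 ≠ 0 := (tCoeff_iff f α).1 hα
  have hperm : ∀ {L L' : List (Fin n)}, L.Perm L' → DL L f 0 = DL L' f 0 := by
    intro L L' h
    rw [DL_perm hf h]
  have hsupp : ∀ i j : Fin n, i ≠ j → 1 ≤ α i → 1 ≤ α j → False := by
    intro i j hij hi hj
    exact hc (core_sym (fun L => DL L f 0) hperm (main_rel hf hH) i j hij α hi hj
      (vertex_force f hv α hvα))
  have hα0 : ∃ i, 1 ≤ α i := by
    by_contra hno
    push_neg at hno
    have hα' : α = fun _ => 0 := funext (fun k => by have := hno k; omega)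
    apply hc
    rw [hα', hperm rep_perm_nil]
    exact h0
  obtain ⟨i, hi⟩ := hα0
  have hrest : ∀ j, j ≠ i → α j = 0 := by
    intro j hj
    by_contra hne
    exact hsupp i j (fun h => hj h.symm) hi (by omega)
  have hαeq : α = psn i (α i) := by
    funext k
    by_cases hk : i = k
    · subst hk; simp [psn]
    · simp [psn, hk]
      exact hrest k (fun h => hk h.symm)
  have hm1 : α i ≠ 1 := by
    intro h1'
    rw [h1'] at hαeq
    apply hc
    rw [hαeq, hperm (rep_perm_single i)]
    show fderiv ℝ f 0 (Pi.single i 1) = 0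
    rw [h1]
    simp
  refine ⟨i, α i, by omega, fun k => ?_, by rw [← hαeq]; exact hc⟩
  rw [hvα k]
  exact_mod_cast congrFun hαeq k

end Part1

/-! ### Part 2 : all vertices have the same height -/

section Part2

variable {n : ℕ} {f : (Fin n → ℝ) → ℝ}

set_option maxHeartbeats 2000000 in
lemma part2_dvd (hf : ContDiff ℝ (⊤ : ℕ∞) f)
    (hH : ∀ u v : Fin n → ℝ, VanishesInfOrder (hessDet2 f u v))
    (i j : Fin n) (hij : i ≠ j) (m m' : ℕ) (hm2 : 2 ≤ m) (hm'2 : 2 ≤ m')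
    (hmi : DL (rep (psn i m)) f 0 ≠ 0) (hmj : DL (rep (psn j m')) f 0 ≠ 0)
    (hmini : ∀ a, a < m → DL (rep (psn i a)) f 0 = 0)
    (hminj : ∀ b, b < m' → DL (rep (psn j b)) f 0 = 0) :
    m ∣ m' := by
  classical
  have hji : j ≠ i := Ne.symm hij
  have hperm : ∀ {L L' : List (Fin n)}, L.Perm L' → DL L f 0 = DL L' f 0 := by
    intro L L' h
    rw [DL_perm hf h]
  set pl : ℕ → ℕ → (Fin n → ℕ) :=
    fun a b => fun k => if i = k then a else if j = k then b else 0 with hpl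
  have hpl_i : ∀ a b, pl a b i = a := by
    intro a b; simp only [hpl, eq_self_iff_true, if_true]
  have hpl_j : ∀ a b, pl a b j = b := by
    intro a b; simp only [hpl, if_neg hij, eq_self_iff_true, if_true]
  have hpl_o : ∀ a b (k : Fin n), i ≠ k → j ≠ k → pl a b k = 0 := by
    intro a b k h1 h2; simp only [hpl, if_neg h1, if_neg h2]
  have hpl_i0 : ∀ a, pl a 0 = psn i a := by
    intro a
    funext k
    rcases eq_or_ne i k with rfl | h1
    · simp [hpl, psn]
    · rcases eq_or_ne j k with rfl | h2
      · simp [hpl, psn, if_neg h1]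
      · simp [hpl, psn, if_neg h1, if_neg h2]
  have hpl_0b : ∀ b, pl 0 b = psn j b := by
    intro b
    funext k
    rcases eq_or_ne i k with rfl | h1
    · simp [hpl, psn, if_neg hji]
    · rcases eq_or_ne j k with rfl | h2
      · simp [hpl, psn, if_neg h1]
      · simp [hpl, psn, if_neg h1, if_neg h2]
  have hpl_two : ∀ a b (k : Fin n), 2 * pl a b k = pl (2*a) (2*b) k := by
    intro a b k
    rcases eq_or_ne i k with rfl | h1
    · rw [hpl_i, hpl_i]
    · rcases eq_or_ne j k with rfl | h2
      · rw [hpl_j, hpl_j]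
      · rw [hpl_o _ _ k h1 h2, hpl_o _ _ k h1 h2]
  have hpl_add : ∀ a b a' b' (k : Fin n), pl a b k + pl a' b' k = pl (a+a') (b+b') k := by
    intro a b a' b' k
    rcases eq_or_ne i k with rfl | h1
    · rw [hpl_i, hpl_i, hpl_i]
    · rcases eq_or_ne j k with rfl | h2
      · rw [hpl_j, hpl_j, hpl_j]
      · rw [hpl_o _ _ k h1 h2, hpl_o _ _ k h1 h2, hpl_o _ _ k h1 h2]
  have hX : ∀ X1 X2 D : ℕ, X1 + X2 = 2 * D → D ≤ X1 → D ≤ X2 → X1 = D ∧ X2 = D := by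
    intro X1 X2 D h1 h2 h3; omega
  have hY : ∀ Y Z W : ℕ, W + Y = W + Z → Y = Z := by intro Y Z W h; omega
  -- planarity
  have hplane : ∀ (P Q : ℕ) (β₁ β₂ : Fin n → ℕ), (∀ k, β₁ k + β₂ k = pl P Q k) →
      β₁ = pl (β₁ i) (β₁ j) ∧ β₂ = pl (β₂ i) (β₂ j)
        ∧ β₁ i + β₂ i = P ∧ β₁ j + β₂ j = Q := by
    intro P Q β₁ β₂ hsum
    have hz : ∀ (k : Fin n), i ≠ k → j ≠ k → β₁ k = 0 ∧ β₂ k = 0 := by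
      intro k h1 h2
      have := hsum k
      rw [hpl_o P Q k h1 h2] at this
      omega
    refine ⟨?_, ?_, ?_, ?_⟩
    · funext k
      rcases eq_or_ne i k with rfl | h1
      · rw [hpl_i]
      · rcases eq_or_ne j k with rfl | h2
        · rw [hpl_j]
        · rw [hpl_o _ _ k h1 h2]; exact (hz k h1 h2).1
    · funext k
      rcases eq_or_ne i k with rfl | h1
      · rw [hpl_i]
      · rcases eq_or_ne j k with rfl | h2
        · rw [hpl_j]
        · rw [hpl_o _ _ k h1 h2]; exact (hz k h1 h2).2
    · have := hsum i; rw [hpl_i] at this; exact this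
    · have := hsum j; rw [hpl_j] at this; exact this
  -- minimal weighted degree
  have hex : ∃ t : ℕ, ∃ a b, m' * a + m * b = t ∧ DL (rep (pl a b)) f 0 ≠ 0 :=
    ⟨m' * m, m, 0, by ring, by rw [hpl_i0]; exact hmi⟩
  set d : ℕ := Nat.find hex with hd
  obtain ⟨a_, b_, hab_, hS_⟩ := Nat.find_spec hex
  have hdle : d ≤ m' * m := Nat.find_le ⟨m, 0, by ring, by rw [hpl_i0]; exact hmi⟩
  have hmin : ∀ a b, DL (rep (pl a b)) f 0 ≠ 0 → d ≤ m' * a + m * b := fun a b h =>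
    Nat.find_le ⟨a, b, rfl, h⟩
  -- first part : d = m' * m
  have hdeq : d = m' * m := by
    by_contra hne
    have hdlt : d < m' * m := lt_of_le_of_ne hdle hne
    have hex2 : ∃ a, ∃ b, m' * a + m * b = d ∧ DL (rep (pl a b)) f 0 ≠ 0 :=
      ⟨a_, b_, hab_, hS_⟩
    set a₀ : ℕ := Nat.find hex2 with ha₀def
    obtain ⟨b₀, hb₀sum, hb₀S⟩ := Nat.find_spec hex2
    rw [← ha₀def] at hb₀sum hb₀S
    have ha₀min : ∀ s u, m' * s + m * u = d → DL (rep (pl s u)) f 0 ≠ 0 → a₀ ≤ s :=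
      fun s u h hs => Nat.find_le ⟨u, h, hs⟩
    have ha₀1 : 1 ≤ a₀ := by
      by_contra hno
      have ha0 : a₀ = 0 := by omega
      rw [ha0] at hb₀sum hb₀S
      have hb₀m' : b₀ < m' := by
        by_contra hge
        push_neg at hge
        have h1 : m * m' ≤ m * b₀ := Nat.mul_le_mul_left m hge
        have h2 : m' * 0 + m * b₀ = m * b₀ := by ring
        rw [h2] at hb₀sum
        have : m * m' = m' * m := by ring
        omega
      rw [hpl_0b b₀] at hb₀S
      exact hb₀S (hminj b₀ hb₀m')
    have hb₀1 : 1 ≤ b₀ := by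
      by_contra hno
      have hb0 : b₀ = 0 := by omega
      rw [hb0] at hb₀sum hb₀S
      have ha₀m : a₀ < m := by
        by_contra hge
        push_neg at hge
        have h1 : m' * m ≤ m' * a₀ := Nat.mul_le_mul_left m' hge
        have h2 : m' * a₀ + m * 0 = m' * a₀ := by ring
        rw [h2] at hb₀sum
        omega
      rw [hpl_i0 a₀] at hb₀S
      exact hb₀S (hmini a₀ ha₀m)
    have hforce : ∀ β₁ β₂ : Fin n → ℕ, DL (rep β₁) f 0 ≠ 0 → DL (rep β₂) f 0 ≠ 0 →
        (∀ k, β₁ k + β₂ k = 2 * pl a₀ b₀ k) → β₁ = pl a₀ b₀ := by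
      intro β₁ β₂ h1 h2 hsum
      have hsum' : ∀ k, β₁ k + β₂ k = pl (2*a₀) (2*b₀) k := by
        intro k; rw [← hpl_two]; exact hsum k
      obtain ⟨e₁, e₂, hsi, hsj⟩ := hplane _ _ β₁ β₂ hsum'
      rw [e₁] at h1
      rw [e₂] at h2
      have n1 : d ≤ m' * β₁ i + m * β₁ j := hmin _ _ h1
      have n2 : d ≤ m' * β₂ i + m * β₂ j := hmin _ _ h2
      have key : (m' * β₁ i + m * β₁ j) + (m' * β₂ i + m * β₂ j) = 2 * d := by
        have e : (m' * β₁ i + m * β₁ j) + (m' * β₂ i + m * β₂ j)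
            = m' * (β₁ i + β₂ i) + m * (β₁ j + β₂ j) := by ring
        rw [e, hsi, hsj, ← hb₀sum]
        ring
      obtain ⟨hν1, hν2⟩ := hX _ _ _ key n1 n2
      have hs1 : a₀ ≤ β₁ i := ha₀min _ _ hν1 h1
      have hs2 : a₀ ≤ β₂ i := ha₀min _ _ hν2 h2
      have hβi : β₁ i = a₀ := by omega
      have hβj : β₁ j = b₀ := by
        rw [hβi] at hν1
        have := hY (m * β₁ j) (m * b₀) (m' * a₀) (by rw [hν1, hb₀sum])
        exact Nat.eq_of_mul_eq_mul_left (by omega) this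
      rw [hβi, hβj] at e₁
      exact e₁
    have := core_sym (fun L => DL L f 0) hperm (main_rel hf hH) i j hij (pl a₀ b₀)
      (by rw [hpl_i]; exact ha₀1) (by rw [hpl_j]; exact hb₀1) hforce
    exact hb₀S this
  -- second part : the smallest positive entry on the critical line is 1
  have hex3 : ∃ a, 1 ≤ a ∧ ∃ b, m' * a + m * b = d ∧ DL (rep (pl a b)) f 0 ≠ 0 :=
    ⟨m, by omega, 0, by rw [hdeq]; ring, by rw [hpl_i0]; exact hmi⟩
  set a₁ : ℕ := Nat.find hex3 with ha₁def
  obtain ⟨ha₁1, b₁, hsum₁, hS₁⟩ := Nat.find_spec hex3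
  rw [← ha₁def] at ha₁1 hsum₁ hS₁
  have ha₁min : ∀ s, 1 ≤ s → ∀ u, m' * s + m * u = d → DL (rep (pl s u)) f 0 ≠ 0 → a₁ ≤ s :=
    fun s h1 u h hs => Nat.find_le ⟨h1, u, h, hs⟩
  have ha₁eq : a₁ = 1 := by
    by_contra hne1
    have ha₁2 : 2 ≤ a₁ := by omega
    have hforce1 : ∀ β₁ β₂ : Fin n → ℕ, DL (rep β₁) f 0 ≠ 0 → DL (rep β₂) f 0 ≠ 0 →
        (∀ k, β₁ k + β₂ k = pl a₁ b₁ k + pl 0 m' k) → 2 ≤ β₁ i → 2 ≤ β₂ j →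
        β₁ = pl a₁ b₁ ∧ β₂ = pl 0 m' := by
      intro β₁ β₂ h1 h2 hsum h2i h2j
      have hsum' : ∀ k, β₁ k + β₂ k = pl (a₁ + 0) (b₁ + m') k := by
        intro k; rw [← hpl_add]; exact hsum k
      obtain ⟨e₁, e₂, hsi, hsj⟩ := hplane _ _ β₁ β₂ hsum'
      rw [e₁] at h1
      rw [e₂] at h2
      have n1 : d ≤ m' * β₁ i + m * β₁ j := hmin _ _ h1
      have n2 : d ≤ m' * β₂ i + m * β₂ j := hmin _ _ h2
      have key : (m' * β₁ i + m * β₁ j) + (m' * β₂ i + m * β₂ j) = 2 * d := by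
        have e : (m' * β₁ i + m * β₁ j) + (m' * β₂ i + m * β₂ j)
            = m' * (β₁ i + β₂ i) + m * (β₁ j + β₂ j) := by ring
        rw [e, hsi, hsj]
        have : m' * (a₁ + 0) + m * (b₁ + m') = (m' * a₁ + m * b₁) + m * m' := by ring
        rw [this, hsum₁, hdeq]
        ring
      obtain ⟨hν1, hν2⟩ := hX _ _ _ key n1 n2
      have hs1 : a₁ ≤ β₁ i := ha₁min _ (by omega) _ hν1 h1
      have hβ₁i : β₁ i = a₁ := by omega
      have hβ₂i : β₂ i = 0 := by omega
      have hβ₁j : β₁ j = b₁ := by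
        rw [hβ₁i] at hν1
        have := hY (m * β₁ j) (m * b₁) (m' * a₁) (by rw [hν1, hsum₁])
        exact Nat.eq_of_mul_eq_mul_left (by omega) this
      have hβ₂j : β₂ j = m' := by
        rw [hβ₂i] at hν2
        have h0' : m' * 0 + m * β₂ j = m * β₂ j := by ring
        rw [h0'] at hν2
        have : m * β₂ j = m * m' := by rw [hν2, hdeq]; ring
        exact Nat.eq_of_mul_eq_mul_left (by omega) this
      constructor
      · rw [hβ₁i, hβ₁j] at e₁; exact e₁
      · rw [hβ₂i, hβ₂j] at e₂; exact e₂
    have hforce2 : ∀ β₁ β₂ : Fin n → ℕ, DL (rep β₁) f 0 ≠ 0 → DL (rep β₂) f 0 ≠ 0 →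
        (∀ k, β₁ k + β₂ k = pl a₁ b₁ k + pl 0 m' k) → 1 ≤ β₁ i → 1 ≤ β₁ j →
        1 ≤ β₂ i → 1 ≤ β₂ j → False := by
      intro β₁ β₂ h1 h2 hsum o1i o1j o2i o2j
      have hsum' : ∀ k, β₁ k + β₂ k = pl (a₁ + 0) (b₁ + m') k := by
        intro k; rw [← hpl_add]; exact hsum k
      obtain ⟨e₁, e₂, hsi, hsj⟩ := hplane _ _ β₁ β₂ hsum'
      rw [e₁] at h1
      rw [e₂] at h2
      have n1 : d ≤ m' * β₁ i + m * β₁ j := hmin _ _ h1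
      have n2 : d ≤ m' * β₂ i + m * β₂ j := hmin _ _ h2
      have key : (m' * β₁ i + m * β₁ j) + (m' * β₂ i + m * β₂ j) = 2 * d := by
        have e : (m' * β₁ i + m * β₁ j) + (m' * β₂ i + m * β₂ j)
            = m' * (β₁ i + β₂ i) + m * (β₁ j + β₂ j) := by ring
        rw [e, hsi, hsj]
        have : m' * (a₁ + 0) + m * (b₁ + m') = (m' * a₁ + m * b₁) + m * m' := by ring
        rw [this, hsum₁, hdeq]
        ring
      obtain ⟨hν1, hν2⟩ := hX _ _ _ key n1 n2
      have hs1 : a₁ ≤ β₁ i := ha₁min _ o1i _ hν1 h1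
      omega
    have happ := core_asym (fun L => DL L f 0) hperm (main_rel hf hH) i j hij
      (pl a₁ b₁) (pl 0 m') (by rw [hpl_i]; exact ha₁2) (by rw [hpl_j]; exact hm'2)
      hforce1 hforce2
    have hBne : DL (rep (pl 0 m')) f 0 ≠ 0 := by rw [hpl_0b]; exact hmj
    exact (mul_ne_zero hS₁ hBne) happ
  -- conclude : m ∣ m'
  rw [ha₁eq] at hsum₁
  rw [hdeq] at hsum₁
  obtain ⟨M, rfl⟩ : ∃ M, m = M + 1 := ⟨m - 1, by omega⟩
  have hr : m' * (M + 1) = m' * M + m' * 1 := by ring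
  rw [hr] at hsum₁
  rw [Nat.add_comm (m' * M) (m' * 1)] at hsum₁
  have h2 : (M + 1) * b₁ = m' * M := Nat.add_left_cancel hsum₁
  have hdvd : (M + 1) ∣ m' * M := ⟨b₁, h2.symm⟩
  have cop : Nat.Coprime (M + 1) M := by
    show Nat.gcd (M + 1) M = 1
    rw [Nat.gcd_self_add_left]
    exact Nat.gcd_one_left M
  exact cop.dvd_of_dvd_mul_right hdvd

end Part2

/-! ### The main theorem -/

/-- Lemma 4.1 (first part): if every 2×2 Hessian determinant of `f` vanishes to
infinite order at the origin, all Newton polyhedron vertices lie at a common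
height `m > 1` on the coordinate axes. -/
theorem vertices_on_axes_of_degenerate_hessian
    {n : ℕ} (f : (Fin n → ℝ) → ℝ) (hf : ContDiff ℝ (⊤ : ℕ∞) f)
    (h0 : f 0 = 0) (h1 : fderiv ℝ f 0 = 0)
    (hT : ∃ α : Fin n → ℕ, tCoeff f α ≠ 0)
    (hH : ∀ u v : Fin n → ℝ, VanishesInfOrder (hessDet2 f u v)) :
    ∃ m : ℝ, 1 < m ∧ ∀ v ∈ vertices f, ∃ i : Fin n, v = Pi.single i m := by
  classical
  have hDL0 : ∀ γ : Fin n → ℕ, tCoeff f γ = 0 → DL (rep γ) f 0 = 0 := by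
    intro γ h
    by_contra hc
    exact ((tCoeff_iff f γ).2 hc) h
  rcases Set.eq_empty_or_nonempty (vertices f) with he | ⟨v₀, hv₀⟩
  · exact ⟨2, by norm_num, fun v hv => absurd (he ▸ hv) (Set.notMem_empty v)⟩
  · obtain ⟨i₀, m₀, hm₀2, hv₀m, hC₀⟩ := vertex_single hf h0 h1 hH hv₀
    have hmin₀ : ∀ a, a < m₀ → DL (rep (psn i₀ a)) f 0 = 0 := fun a ha =>
      hDL0 _ (vertex_axis_min f hv₀ i₀ m₀ hv₀m a ha)
    refine ⟨(m₀ : ℝ), by exact_mod_cast (by omega : 1 < m₀), ?_⟩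
    intro w hw
    obtain ⟨i, mw, hmw2, hwm, hCw⟩ := vertex_single hf h0 h1 hH hw
    have hminw : ∀ a, a < mw → DL (rep (psn i a)) f 0 = 0 := fun a ha =>
      hDL0 _ (vertex_axis_min f hw i mw hwm a ha)
    refine ⟨i, ?_⟩
    have hmm : mw = m₀ := by
      by_cases hii : i = i₀
      · subst hii
        rcases lt_trichotomy mw m₀ with hlt | heq | hgt
        · exact absurd (hmin₀ mw hlt) hCw
        · exact heq
        · exact absurd (hminw m₀ hgt) hC₀
      · exact Nat.dvd_antisymm
          (part2_dvd hf hH i i₀ hii mw m₀ hmw2 hm₀2 hCw hC₀ hminw hmin₀)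
          (part2_dvd hf hH i₀ i (fun h => hii h.symm) m₀ mw hm₀2 hmw2 hC₀ hCw hmin₀ hminw)
    have : w = fun k => ((psn i m₀ k : ℕ) : ℝ) := funext (fun k => by rw [hwm k, hmm])
    rw [this, psn_cast]
end
end

section
/- Let b₁ ∈ C_c^∞(ℝ) and m ≥ 2 an integer, and suppose T₁(λ) = ∫ b₁(x) e^{−iλx^m} dx satisfies |λ|^{1/m} T₁(λ) → C₀ ≠ 0 as λ → ∞. Let b₂ ∈ C_c^∞(ℝ^{n−1}) with b̂₂(0) ≠ 0. Define T(λ₁,...,λₙ) = ∫_{ℝⁿ} b₁(x_i) b₂(x₁,...,x_{i−1},x_{i+1},...,xₙ) e^{−iλ·x − iλ_{n+1} x_i^m} dx for the phase with H(x) = x_i^m. Then lim sup_{r→∞} sup_{|λ|=r} |T(λ)| / |λ|^{−1/m} > 0. -/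
open MeasureTheory Complex

theorem surface_fourier_transform_lower_bound
    {n : ℕ} (i : Fin n) (m : ℕ) (hm : 2 ≤ m)
    (b₁ : ℝ → ℝ) (hb₁ : ContDiff ℝ (⊤ : ℕ∞) b₁) (hb₁c : HasCompactSupport b₁)
    (T₁ : ℝ → ℂ)
    (hT₁ : ∀ lam : ℝ, T₁ lam =
      ∫ x : ℝ, (b₁ x : ℂ) * Complex.exp (-Complex.I * (lam * x ^ m : ℝ)))
    (C₀ : ℂ) (hC₀ : C₀ ≠ 0)
    (hlim : Filter.Tendsto (fun lam : ℝ => (|lam| ^ ((1 : ℝ) / m) : ℝ) • T₁ lam)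
      Filter.atTop (nhds C₀))
    (b₂ : ({j : Fin n // j ≠ i} → ℝ) → ℝ)
    (hb₂ : ContDiff ℝ (⊤ : ℕ∞) b₂) (hb₂c : HasCompactSupport b₂)
    (hb₂0 : (∫ y : {j : Fin n // j ≠ i} → ℝ, b₂ y) ≠ 0)
    (T : (Fin (n + 1) → ℝ) → ℂ)
    (hT : ∀ lam : Fin (n + 1) → ℝ, T lam =
      ∫ x : Fin n → ℝ,
        ((b₁ (x i) * b₂ fun j => x j.1 : ℝ) : ℂ) *
          Complex.exp (-Complex.I *
            (((∑ j : Fin n, lam j.castSucc * x j) + lam (Fin.last n) * (x i) ^ m : ℝ))) ) :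
    ∃ c > (0 : ℝ), ∀ R : ℝ, ∃ lam : Fin (n + 1) → ℝ,
      R < ‖lam‖ ∧ c * ‖lam‖ ^ (-(1 : ℝ) / m) ≤ ‖T lam‖ := by
  classical
  have huniq : Unique {j : Fin n // j = i} :=
    ⟨⟨⟨i, rfl⟩⟩, fun a => Subtype.ext a.2⟩
  -- factorization
  have key : ∀ t : ℝ, T (Pi.single (Fin.last n) t) = ((∫ y, b₂ y : ℝ) : ℂ) * T₁ t := by
    intro t
    rw [hT]
    have hzero : ∀ j : Fin n,
        (Pi.single (Fin.last n) t : Fin (n+1) → ℝ) j.castSucc = 0 := fun j => by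
      simp [Pi.single_eq_of_ne (Fin.castSucc_lt_last j).ne]
    have hphase : ∀ x : Fin n → ℝ,
        ((∑ j : Fin n, (Pi.single (Fin.last n) t : Fin (n+1) → ℝ) j.castSucc * x j)
          + (Pi.single (Fin.last n) t : Fin (n+1) → ℝ) (Fin.last n) * (x i) ^ m : ℝ)
        = t * (x i) ^ m := by
      intro x
      simp [hzero]
    have hint : (∫ x : Fin n → ℝ,
        ((b₁ (x i) * b₂ fun j => x j.1 : ℝ) : ℂ) *
          Complex.exp (-Complex.I *
            (((∑ j : Fin n, (Pi.single (Fin.last n) t : Fin (n+1) → ℝ) j.castSucc * x j)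
              + (Pi.single (Fin.last n) t : Fin (n+1) → ℝ) (Fin.last n) * (x i) ^ m : ℝ))))
        = ∫ x : Fin n → ℝ,
            ((b₂ fun j => x j.1 : ℝ) : ℂ) *
              ((b₁ (x i) : ℂ) * Complex.exp (-Complex.I * (t * (x i) ^ m : ℝ))) := by
      refine integral_congr_ae (Filter.Eventually.of_forall fun x => ?_)
      simp only [hphase]
      push_cast
      ring
    rw [hint]
    -- split the integral
    have hmp := (MeasureTheory.volume_preserving_piEquivPiSubtypeProd
      (fun _ : Fin n => ℝ) (fun j => j = i)).symm
    rw [← hmp.integral_comp (MeasurableEquiv.measurableEmbedding _)]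
    have hcomp : ∀ z : ({j : Fin n // j = i} → ℝ) × ({j : Fin n // ¬ j = i} → ℝ),
        (((b₂ fun j => ((MeasurableEquiv.piEquivPiSubtypeProd
            (fun _ : Fin n => ℝ) (fun j => j = i)).symm z) j.1 : ℝ) : ℂ) *
          ((b₁ (((MeasurableEquiv.piEquivPiSubtypeProd
            (fun _ : Fin n => ℝ) (fun j => j = i)).symm z) i) : ℂ) *
            Complex.exp (-Complex.I *
              (t * (((MeasurableEquiv.piEquivPiSubtypeProd
                (fun _ : Fin n => ℝ) (fun j => j = i)).symm z) i) ^ m : ℝ))))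
        = ((b₁ (z.1 ⟨i, rfl⟩) : ℂ) *
              Complex.exp (-Complex.I * (t * (z.1 ⟨i, rfl⟩) ^ m : ℝ))) *
            ((b₂ z.2 : ℝ) : ℂ) := by
      intro z
      have h1 : ((MeasurableEquiv.piEquivPiSubtypeProd
          (fun _ : Fin n => ℝ) (fun j => j = i)).symm z) i = z.1 ⟨i, rfl⟩ := by
        simp [MeasurableEquiv.piEquivPiSubtypeProd_symm_apply]
      have h2 : (fun j : {j : Fin n // j ≠ i} => ((MeasurableEquiv.piEquivPiSubtypeProd
          (fun _ : Fin n => ℝ) (fun j => j = i)).symm z) j.1) = z.2 := by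
        funext j
        simp [MeasurableEquiv.piEquivPiSubtypeProd_symm_apply, j.2]
      rw [h1, h2]
      ring
    rw [integral_congr_ae (Filter.Eventually.of_forall hcomp)]
    rw [MeasureTheory.Measure.volume_eq_prod, MeasureTheory.integral_prod_mul
      (fun a : {j : Fin n // j = i} → ℝ => ((b₁ (a ⟨i, rfl⟩) : ℂ) *
        Complex.exp (-Complex.I * (t * (a ⟨i, rfl⟩) ^ m : ℝ))))
      (fun b => ((b₂ b : ℝ) : ℂ))]
    have hb2 : (∫ y : {j : Fin n // ¬ j = i} → ℝ, ((b₂ y : ℝ) : ℂ))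
        = ((∫ y : {j : Fin n // j ≠ i} → ℝ, b₂ y : ℝ) : ℂ) := integral_ofReal
    have hb1 : (∫ a : {j : Fin n // j = i} → ℝ,
          ((b₁ (a ⟨i, rfl⟩) : ℂ) *
            Complex.exp (-Complex.I * (t * (a ⟨i, rfl⟩) ^ m : ℝ)))) = T₁ t := by
      rw [hT₁]
      rw [← (MeasureTheory.volume_preserving_funUnique {j : Fin n // j = i} ℝ).integral_comp
        (MeasurableEquiv.measurableEmbedding _)]
      have hvol : (volume : Measure ({j : Fin n // j = i} → ℝ)) =
          @volume _ (@MeasureSpace.pi _ Unique.fintype (fun _ => ℝ) fun _ => Real.measureSpace) := by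
        congr!
      rw [hvol]
      refine integral_congr_ae (Filter.Eventually.of_forall fun a => ?_)
      beta_reduce
      have ha : (MeasurableEquiv.funUnique {j : Fin n // j = i} ℝ) a = a ⟨i, rfl⟩ := by
        show a default = a ⟨i, rfl⟩
        congr 1
        exact Subsingleton.elim _ _
      rw [ha]
    rw [hb2, mul_comm]
    congr 1
    rw [← hb1]
    congr!
  have hb2pos : 0 < |∫ y : {j : Fin n // j ≠ i} → ℝ, b₂ y| := abs_pos.mpr hb₂0
  have hC₀pos : 0 < ‖C₀‖ := norm_pos_iff.mpr hC₀
  refine ⟨|∫ y : {j : Fin n // j ≠ i} → ℝ, b₂ y| * (‖C₀‖ / 2), by positivity, fun R => ?_⟩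
  obtain ⟨t, hdist, ht⟩ := ((Metric.tendsto_nhds.mp hlim (‖C₀‖/2) (by positivity)).and
    (Filter.eventually_gt_atTop (max R 1))).exists
  have ht1 : (1:ℝ) < t := lt_of_le_of_lt (le_max_right R 1) ht
  have ht0 : (0:ℝ) < t := lt_trans one_pos ht1
  have habs : |t| = t := abs_of_pos ht0
  have ha : (0:ℝ) < t ^ ((1:ℝ)/m) := Real.rpow_pos_of_pos ht0 _
  refine ⟨Pi.single (Fin.last n) t, ?_, ?_⟩
  · rw [Pi.norm_single, Real.norm_eq_abs, habs]
    exact lt_of_le_of_lt (le_max_left R 1) ht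
  · have hnorm : ‖T (Pi.single (Fin.last n) t)‖
        = |∫ y : {j : Fin n // j ≠ i} → ℝ, b₂ y| * ‖T₁ t‖ := by
      rw [key t, norm_mul, Complex.norm_real, Real.norm_eq_abs]
    have hx : ‖C₀‖/2 ≤ ‖(|t| ^ ((1:ℝ)/m) : ℝ) • T₁ t‖ := by
      rw [dist_eq_norm] at hdist
      have h2 := norm_sub_norm_le C₀ ((|t| ^ ((1:ℝ)/m) : ℝ) • T₁ t)
      rw [norm_sub_rev] at h2
      linarith
    have hl : ‖C₀‖/2 ≤ t ^ ((1:ℝ)/m) * ‖T₁ t‖ := by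
      rwa [norm_smul, Real.norm_eq_abs,
        _root_.abs_of_nonneg (Real.rpow_nonneg (abs_nonneg t) _), habs] at hx
    have h4 : ‖C₀‖/2 * (t ^ ((1:ℝ)/m))⁻¹ ≤ ‖T₁ t‖ := by
      rw [← div_eq_mul_inv, div_le_iff₀ ha, mul_comm]
      exact hl
    rw [hnorm, Pi.norm_single, Real.norm_eq_abs, habs]
    have hexp : t ^ (-(1:ℝ)/m) = (t ^ ((1:ℝ)/m))⁻¹ := by
      rw [neg_div, Real.rpow_neg ht0.le]
    rw [hexp]
    calc |∫ y : {j : Fin n // j ≠ i} → ℝ, b₂ y| * (‖C₀‖/2) * (t ^ ((1:ℝ)/m))⁻¹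
        = |∫ y : {j : Fin n // j ≠ i} → ℝ, b₂ y| * (‖C₀‖/2 * (t ^ ((1:ℝ)/m))⁻¹) := by ring
      _ ≤ |∫ y : {j : Fin n // j ≠ i} → ℝ, b₂ y| * ‖T₁ t‖ :=
        mul_le_mul_of_nonneg_left h4 (abs_nonneg _)
end

section
/- Suppose 0 ≤ w_l ≤ d for all l = 1,...,n with d ≥ 2 an integer, and at most n−k of the w_l equal d. Then there is a constant C such that for all λ with |λ| > 2, ∫_{(0,1)^n} min(1, (|λ| · z_1^{w_1}···z_n^{w_n})^{−1/d}) dz ≤ C |λ|^{−1/d} (ln|λ|)^{n−k}. -/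
open MeasureTheory

theorem integral_min_one_rpow_bound
    {n : ℕ} (w : Fin n → ℝ) (d : ℕ) (hd : 2 ≤ d)
    (hw : ∀ l, 0 ≤ w l ∧ w l ≤ d)
    (k : ℕ) (hk : Nat.card {l : Fin n // w l = d} ≤ n - k) :
    ∃ C : ℝ, ∀ lam : ℝ, 2 < |lam| →
      (∫ z in {z : Fin n → ℝ | ∀ i, z i ∈ Set.Ioo (0:ℝ) 1},
        min 1 ((|lam| * ∏ i, z i ^ w i) ^ (-(1 : ℝ) / d))) ≤
      C * |lam| ^ (-(1 : ℝ) / d) * Real.log |lam| ^ (n - k) := by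
  classical
  have hd0 : (0:ℝ) < d := by positivity
  have hlog2 : (0:ℝ) < Real.log 2 := Real.log_pos one_lt_two
  set m : ℕ := (Finset.univ.filter (fun i => w i = (d:ℝ))).card with hm_def
  have hmk : m ≤ n - k := by
    rwa [Nat.card_eq_fintype_card, Fintype.card_subtype] at hk
  set Cnp : ℝ := ∏ i ∈ Finset.univ.filter (fun i => ¬ w i = (d:ℝ)), (1 - w i / d)⁻¹ with hCnp
  have hwd_pos : ∀ i, ¬ w i = (d:ℝ) → 0 < 1 - w i / d := by
    intro i hi
    have h1 : w i < d := lt_of_le_of_ne (hw i).2 hi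
    rw [sub_pos, div_lt_one hd0]; exact h1
  have hCnp_nonneg : 0 ≤ Cnp := by
    apply Finset.prod_nonneg
    intro i hi
    simp only [Finset.mem_filter] at hi
    exact inv_nonneg.2 (hwd_pos i hi.2).le
  refine ⟨2 * Cnp * ((Real.log 2)⁻¹) ^ (n - k), ?_⟩
  intro lam hlam
  set A := |lam| with hA_def
  have hA0 : (0:ℝ) < A := by linarith
  set L := Real.log A with hL_def
  have hL2 : Real.log 2 < L := Real.log_lt_log two_pos hlam
  have hL0 : (0:ℝ) < L := lt_trans hlog2 hL2
  set θ : ℝ := 1 - Real.log 2 / L with hθ_def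
  have hθ0 : 0 ≤ θ := by
    have : Real.log 2 / L < 1 := (div_lt_one hL0).2 hL2
    simp only [hθ_def]; linarith
  have hθ1 : θ < 1 := by
    have : 0 < Real.log 2 / L := div_pos hlog2 hL0
    simp only [hθ_def]; linarith
  have h1θ : 1 - θ = Real.log 2 / L := by simp [hθ_def]
  set em : ℝ := (-(1:ℝ)/d) * θ with hem_def
  set e : Fin n → ℝ := fun i => w i * em with he_def
  clear_value e em θ
  have he_eq : ∀ i, e i = -(w i / d * θ) := by
    intro i
    simp only [he_def, hem_def]
    field_simp
  have he : ∀ i, -1 < e i := by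
    intro i
    have h1 : 0 ≤ w i / d := div_nonneg (hw i).1 hd0.le
    have h2 : w i / d ≤ 1 := (div_le_one hd0).2 (hw i).2
    rw [he_eq i]
    have h3 : w i / (d:ℝ) * θ ≤ 1 * θ := mul_le_mul_of_nonneg_right h2 hθ0
    linarith
  have hei1 : ∀ i, 0 < e i + 1 := fun i => by linarith [he i]
  -- single variable integrals
  have hIntOn : ∀ i, IntegrableOn (fun x : ℝ => x ^ e i) (Set.Ioo 0 1) := by
    intro i
    have := (intervalIntegrable_iff_integrableOn_Ioc_of_le (zero_le_one (α := ℝ))).1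
      (intervalIntegral.intervalIntegrable_rpow' (he i))
    exact this.mono_set Set.Ioo_subset_Ioc_self
  have hIntVal : ∀ i, ∫ x in Set.Ioo (0:ℝ) 1, x ^ e i = (e i + 1)⁻¹ := by
    intro i
    rw [← integral_Ioc_eq_integral_Ioo, ← intervalIntegral.integral_of_le zero_le_one,
      integral_rpow (Or.inl (he i))]
    rw [Real.one_rpow, Real.zero_rpow (by linarith [hei1 i])]
    simp [one_div]
  set f : Fin n → ℝ → ℝ := fun i => (Set.Ioo (0:ℝ) 1).indicator (fun x => x ^ e i) with hf_def
  have hf_int : ∀ i, Integrable (f i) := by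
    intro i
    simp only [hf_def]
    exact (integrable_indicator_iff measurableSet_Ioo).2 (hIntOn i)
  have hf_nonneg : ∀ i x, 0 ≤ f i x := by
    intro i x
    apply Set.indicator_nonneg
    intro y hy
    exact Real.rpow_nonneg hy.1.le _
  set S : Set (Fin n → ℝ) := {z : Fin n → ℝ | ∀ i, z i ∈ Set.Ioo (0:ℝ) 1} with hS_def
  have hS_meas : MeasurableSet S := by
    have hS_eq : S = Set.pi Set.univ (fun _ => Set.Ioo (0:ℝ) 1) := by
      ext z; simp [hS_def, Set.mem_pi]
    rw [hS_eq]; exact MeasurableSet.univ_pi (fun _ => measurableSet_Ioo)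
  set G : (Fin n → ℝ) → ℝ := fun z => A ^ em * ∏ i, f i (z i) with hG_def
  have hG_int : Integrable G := (Integrable.fintype_prod (𝕜 := ℝ) hf_int).const_mul _
  set F : (Fin n → ℝ) → ℝ := fun z => min 1 ((A * ∏ i, z i ^ w i) ^ (-(1:ℝ)/d)) with hF_def
  -- pointwise bound
  have key : ∀ z ∈ S, F z ≤ G z := by
    intro z hz
    have hzpos : ∀ i, 0 < z i := fun i => (hz i).1
    have hP : 0 < ∏ i, z i ^ w i :=
      Finset.prod_pos fun i _ => Real.rpow_pos_of_pos (hzpos i) _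
    have hAP : 0 < A * ∏ i, z i ^ w i := mul_pos hA0 hP
    have ht : 0 < (A * ∏ i, z i ^ w i) ^ (-(1:ℝ)/d) := Real.rpow_pos_of_pos hAP _
    have hmin : min 1 ((A * ∏ i, z i ^ w i) ^ (-(1:ℝ)/d))
        ≤ ((A * ∏ i, z i ^ w i) ^ (-(1:ℝ)/d)) ^ θ := by
      set t : ℝ := (A * ∏ i, z i ^ w i) ^ (-(1:ℝ)/d)
      rcases le_total t 1 with h | h
      · rw [min_eq_right h]
        calc t = t ^ (1:ℝ) := (Real.rpow_one t).symm
        _ ≤ t ^ θ := Real.rpow_le_rpow_of_exponent_ge ht h hθ1.le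
      · rw [min_eq_left h]
        exact Real.one_le_rpow h hθ0
    have heq : ((A * ∏ i, z i ^ w i) ^ (-(1:ℝ)/d)) ^ θ = G z := by
      rw [← Real.rpow_mul hAP.le, ← hem_def, Real.mul_rpow hA0.le hP.le]
      simp only [hG_def]
      congr 1
      rw [← Real.finset_prod_rpow _ _ (fun i _ => Real.rpow_nonneg (hzpos i).le _)]
      apply Finset.prod_congr rfl
      intro i _
      rw [← Real.rpow_mul (hzpos i).le]
      simp only [hf_def]
      rw [Set.indicator_of_mem (hz i)]
      simp only [he_def]
    simpa only [hF_def, heq] using hmin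
  -- the main calc
  have step1 : (∫ z in S, F z) ≤ ∫ z, G z := by
    rw [← integral_indicator hS_meas]
    apply integral_mono_of_nonneg _ hG_int
    · filter_upwards with z
      by_cases hz : z ∈ S
      · rw [Set.indicator_of_mem hz]; exact key z hz
      · rw [Set.indicator_of_notMem hz]
        apply mul_nonneg (Real.rpow_nonneg hA0.le _)
        exact Finset.prod_nonneg fun i _ => hf_nonneg i (z i)
    · filter_upwards with z
      apply Set.indicator_nonneg
      intro y hy
      have hP : (0:ℝ) ≤ ∏ i, y i ^ w i :=
        Finset.prod_nonneg fun i _ => Real.rpow_nonneg (hy i).1.le _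
      exact le_min zero_le_one (Real.rpow_nonneg (mul_nonneg hA0.le hP) _)
  have step2 : (∫ z, G z) = A ^ em * ∏ i, (e i + 1)⁻¹ := by
    simp only [hG_def]
    rw [integral_const_mul, volume_pi, integral_fintype_prod_eq_prod (ι := Fin n) f]
    congr 1
    apply Finset.prod_congr rfl
    intro i _
    simp only [hf_def]
    rw [integral_indicator measurableSet_Ioo]
    exact hIntVal i
  -- bound on A ^ em
  have hA_em : A ^ em ≤ 2 * A ^ (-(1:ℝ)/d) := by
    have hsplit : em = (-(1:ℝ)/d) + (1/d) * (1-θ) := by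
      simp only [hem_def]; field_simp; ring
    rw [hsplit, Real.rpow_add hA0]
    have h2d : A ^ ((1:ℝ)/d * (1-θ)) = (2:ℝ) ^ ((1:ℝ)/d) := by
      rw [Real.rpow_def_of_pos hA0, Real.rpow_def_of_pos two_pos]
      congr 1
      rw [h1θ]
      field_simp
      ring
    have h2le : (2:ℝ) ^ ((1:ℝ)/d) ≤ 2 := by
      calc (2:ℝ) ^ ((1:ℝ)/d) ≤ (2:ℝ) ^ (1:ℝ) := by
            apply Real.rpow_le_rpow_of_exponent_le one_le_two
            rw [div_le_one hd0]
            exact_mod_cast Nat.one_le_cast.2 (by omega)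
      _ = 2 := Real.rpow_one 2
    calc A ^ (-(1:ℝ)/d) * A ^ ((1:ℝ)/d * (1-θ)) ≤ A ^ (-(1:ℝ)/d) * 2 := by
          rw [h2d]
          exact mul_le_mul_of_nonneg_left h2le (Real.rpow_nonneg hA0.le _)
    _ = 2 * A ^ (-(1:ℝ)/d) := mul_comm _ _
  -- bound on the product
  have hprod : (∏ i, (e i + 1)⁻¹) ≤ Cnp * (L / Real.log 2) ^ m := by
    rw [← Finset.prod_filter_mul_prod_filter_not Finset.univ (fun i => w i = (d:ℝ))]
    have h1 : (∏ i ∈ Finset.univ.filter (fun i => w i = (d:ℝ)), (e i + 1)⁻¹)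
        = (L / Real.log 2) ^ m := by
      rw [Finset.prod_congr rfl (fun i hi => ?_), Finset.prod_const, hm_def]
      simp only [Finset.mem_filter] at hi
      have : e i = -θ := by
        rw [he_eq i, hi.2]
        rw [div_self hd0.ne']
        ring
      rw [this]
      have : -θ + 1 = Real.log 2 / L := by rw [← h1θ]; ring
      rw [this, inv_div]
    have h2 : (∏ i ∈ Finset.univ.filter (fun i => ¬ w i = (d:ℝ)), (e i + 1)⁻¹) ≤ Cnp := by
      apply Finset.prod_le_prod
      · intro i _; exact inv_nonneg.2 (hei1 i).le
      · intro i hi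
        simp only [Finset.mem_filter] at hi
        apply inv_anti₀ (hwd_pos i hi.2)
        rw [he_eq i]
        have h1' : 0 ≤ w i / (d:ℝ) := div_nonneg (hw i).1 hd0.le
        have h3 : w i / (d:ℝ) * θ ≤ w i / d := mul_le_of_le_one_right h1' hθ1.le
        linarith
    calc (∏ i ∈ Finset.univ.filter (fun i => w i = (d:ℝ)), (e i + 1)⁻¹) *
          ∏ i ∈ Finset.univ.filter (fun i => ¬ w i = (d:ℝ)), (e i + 1)⁻¹
        ≤ (L / Real.log 2) ^ m * Cnp := by
          rw [h1]
          exact mul_le_mul_of_nonneg_left h2 (by positivity)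
    _ = Cnp * (L / Real.log 2) ^ m := mul_comm _ _
  -- put it together
  have hpow : (L / Real.log 2) ^ m ≤ (L / Real.log 2) ^ (n - k) := by
    apply pow_le_pow_right₀ _ hmk
    rw [le_div_iff₀ hlog2, one_mul]
    exact hL2.le
  calc (∫ z in S, F z) ≤ ∫ z, G z := step1
  _ = A ^ em * ∏ i, (e i + 1)⁻¹ := step2
  _ ≤ (2 * A ^ (-(1:ℝ)/d)) * (Cnp * (L / Real.log 2) ^ m) := by
      apply mul_le_mul hA_em hprod
      · exact Finset.prod_nonneg fun i _ => inv_nonneg.2 (hei1 i).le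
      · positivity
  _ ≤ (2 * A ^ (-(1:ℝ)/d)) * (Cnp * (L / Real.log 2) ^ (n - k)) := by
      apply mul_le_mul_of_nonneg_left (mul_le_mul_of_nonneg_left hpow hCnp_nonneg)
      positivity
  _ = 2 * Cnp * ((Real.log 2)⁻¹) ^ (n - k) * A ^ (-(1:ℝ)/d) * L ^ (n - k) := by
      rw [div_pow]
      field_simp
      simp only [one_div, inv_pow]
      rw [mul_assoc, mul_inv_cancel₀ (pow_ne_zero _ hlog2.ne'), mul_one]
end
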